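/- arXiv:2510.25127 — 2 statements merged into one kernel-verified Lean document; each statement's English description precedes it below -/
import Mathlib

section
/- For a correlation scenario S = (I, M, O) in which every output set has size at least 2 and every input set is finite and nonempty (input sets are allowed to be singletons), the set of no-signalling behaviours equals the Bell-local polytope, NS(S) = B(S), if and only if |M_i| = 1 for all but at most one party i ∈ I. -/
open scoped Classical
open MeasureTheory

noncomputable section

/-- A correlation scenario `S = (I, M, O)`: a finite set `I` of parties, for each party `i`
a finite nonempty set `M i` of inputs, and for each input `x : M i` a finite set `O i x`
of outputs with at least two elements. -/
structure Scenario where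
  I : Type
  M : I → Type
  O : (i : I) → M i → Type
  fI : Fintype I
  fM : ∀ i, Fintype (M i)
  fO : ∀ i x, Fintype (O i x)
  hM : ∀ i, Nonempty (M i)
  hO : ∀ i x, 2 ≤ Fintype.card (O i x)

attribute [instance] Scenario.fI Scenario.fM Scenario.fO Scenario.hM

instance Scenario.instNonemptyO (S : Scenario) (i : S.I) (x : S.M i) : Nonempty (S.O i x) :=
  Fintype.card_pos_iff.mp (by have := S.hO i x; omega)

/-- Input strings of a scenario. -/
abbrev InputString (S : Scenario) := ∀ i, S.M i

/-- Output strings for a given input string. -/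
abbrev OutputString (S : Scenario) (x : InputString S) := ∀ i, S.O i (x i)

/-- The ambient real vector space with one coordinate `℘(a|x)` for each pair of an input
string `x` and an output string `a`. -/
abbrev Behaviour (S : Scenario) := (x : InputString S) → OutputString S x → ℝ

/-- `p` is a behaviour: each `p x` is a probability distribution on output strings. -/
def IsBehaviour (S : Scenario) (p : Behaviour S) : Prop :=
  (∀ x a, 0 ≤ p x a) ∧ ∀ x, ∑ a, p x a = 1

/-- The marginal `℘(a_V | x)` of a behaviour on the set `V` of parties, evaluated at the
restriction of `a` to `V`. -/
def marg (S : Scenario) (p : Behaviour S) (x : InputString S) (V : Set S.I)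
    (a : OutputString S x) : ℝ :=
  ∑ b : OutputString S x, if ∀ i ∈ V, b i = a i then p x b else 0

/-- No-signalling: replacing the input of party `i` (all other inputs fixed) leaves the
marginal on `I ∖ {i}` unchanged. -/
def NoSignalling (S : Scenario) (p : Behaviour S) : Prop :=
  ∀ (i : S.I) (x : InputString S) (m : S.M i)
    (a : OutputString S x) (a' : OutputString S (Function.update x i m)),
    (∀ j, j ≠ i → HEq (a j) (a' j)) →
    marg S p x {i}ᶜ a = marg S p (Function.update x i m) {i}ᶜ a'

/-- The set `NS(S)` of no-signalling behaviours. -/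
def NSset (S : Scenario) : Set (Behaviour S) :=
  {p | IsBehaviour S p ∧ NoSignalling S p}

/-- A behaviour is predictable if all its probabilities are `0` or `1`. -/
def Predictable (S : Scenario) (p : Behaviour S) : Prop :=
  ∀ x a, p x a = 0 ∨ p x a = 1

/-- The set `P_NS(S)` of predictable no-signalling behaviours. -/
def PNS (S : Scenario) : Set (Behaviour S) :=
  {p | IsBehaviour S p ∧ NoSignalling S p ∧ Predictable S p}

/-- The Bell-local polytope `B(S) = conv(P_NS(S))`. -/
def BellSet (S : Scenario) : Set (Behaviour S) :=
  convexHull ℝ (PNS S)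

/-- `F_x = {i : x i ∈ M' i}`, the context-dependent set of parties choosing an input in the
distinguished collection `M'`. -/
def Fup (S : Scenario) (M' : ∀ i, Set (S.M i)) (x : InputString S) : Set S.I :=
  {i | x i ∈ M' i}

/-- Partial predictability w.r.t. the collection `M'`: every marginal on a subset of `F_x`
is `{0,1}`-valued. -/
def PartPredictable (S : Scenario) (M' : ∀ i, Set (S.M i)) (p : Behaviour S) : Prop :=
  ∀ (x : InputString S) (V : Set S.I), V ⊆ Fup S M' x →
    ∀ a, marg S p x V a = 0 ∨ marg S p x V a = 1

/-- The set `PP(S, M')` of behaviours partially predictable w.r.t. `M'`. -/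
def PPset (S : Scenario) (M' : ∀ i, Set (S.M i)) : Set (Behaviour S) :=
  {p | IsBehaviour S p ∧ PartPredictable S M' p}

/-- The set `PP_NS(S, M')` of partially predictable no-signalling behaviours. -/
def PPNS (S : Scenario) (M' : ∀ i, Set (S.M i)) : Set (Behaviour S) :=
  {p | IsBehaviour S p ∧ NoSignalling S p ∧ PartPredictable S M' p}

/-- The partially deterministic polytope `PD(S, M') = conv(PP_NS(S, M'))`. -/
def PD (S : Scenario) (M' : ∀ i, Set (S.M i)) : Set (Behaviour S) :=
  convexHull ℝ (PPNS S M')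

/-- The restricted scenario `S_{|M'}`: parties `{i : M' i ≠ ∅}`, input sets `M' i`, same
output sets. -/
def Scenario.restrict (S : Scenario) (M' : ∀ i, Set (S.M i)) : Scenario where
  I := {i : S.I // (M' i).Nonempty}
  M := fun i => ↥(M' i.1)
  O := fun i x => S.O i.1 x.1
  fI := Subtype.fintype _
  fM := fun i => (Set.toFinite (M' i.1)).fintype
  fO := fun i x => S.fO i.1 x.1
  hM := fun i => i.2.to_subtype
  hO := fun i x => S.hO i.1 x.1

/-- A bipartition `(S_{|M'}, S_{|M'^⊥})` is nonredundant unless `M'` is everything or nothing. -/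
def Nonredundant (S : Scenario) (M' : ∀ i, Set (S.M i)) : Prop :=
  ¬ (∀ i, M' i = Set.univ) ∧ ¬ (∀ i, M' i = (∅ : Set (S.M i)))

/-- Extension of an input string of `S` to an input string of the restricted scenario
`S_{|M'}` (choosing arbitrary inputs for the parties `i` with `x i ∉ M' i`). -/
def extendInput (S : Scenario) (M' : ∀ i, Set (S.M i)) (x : InputString S) :
    InputString (S.restrict M') :=
  fun i => if h : x i.1 ∈ M' i.1 then ⟨x i.1, h⟩ else ⟨i.2.some, i.2.some_mem⟩

/-- Extension of an output string of `S` to an output string of the restricted scenario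
`S_{|M'}` at the extended input string. -/
def extendOutput (S : Scenario) (M' : ∀ i, Set (S.M i)) (x : InputString S)
    (a : OutputString S x) : OutputString (S.restrict M') (extendInput S M' x) :=
  fun i =>
    if h : x i.1 ∈ M' i.1 then
      cast (congrArg (S.O i.1)
        (show x i.1 = (extendInput S M' x i).1 by unfold extendInput; first | exact (congrArg Subtype.val (dif_pos h)).symm | simp [h]))
        (a i.1)
    else Classical.arbitrary _

/-- The behaviour product `℘' ⊙ ℘'^⊥` of behaviours on the two halves `S' = S_{|M'}` and
`S'^⊥ = S_{|M'^⊥}` of a disjoint bipartition of `S`: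
`(℘'⊙℘'^⊥)(a|x) = ℘'(a_{F_x}|x_{F_x}) · ℘'^⊥(a_{I∖F_x}|x_{I∖F_x})`, the factors being the
corresponding marginals (well defined for no-signalling behaviours). -/
def bprod (S : Scenario) (M' : ∀ i, Set (S.M i))
    (p' : Behaviour (S.restrict M'))
    (p'' : Behaviour (S.restrict fun i => (M' i)ᶜ)) :
    Behaviour S :=
  fun x a =>
    marg (S.restrict M') p' (extendInput S M' x)
        {i : (S.restrict M').I | x i.1 ∈ M' i.1} (extendOutput S M' x a) *
    marg (S.restrict fun i => (M' i)ᶜ) p'' (extendInput S (fun i => (M' i)ᶜ) x)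
        {i : (S.restrict fun i => (M' i)ᶜ).I | x i.1 ∈ (M' i.1)ᶜ}
        (extendOutput S (fun i => (M' i)ᶜ) x a)

/-- The product `K' ⊙ K''` of two sets of behaviours on the halves of a bipartition. -/
def bprodSet (S : Scenario) (M' : ∀ i, Set (S.M i))
    (K' : Set (Behaviour (S.restrict M')))
    (K'' : Set (Behaviour (S.restrict fun i => (M' i)ᶜ))) :
    Set (Behaviour S) :=
  Set.image2 (bprod S M') K' K''

end

noncomputable section

namespace NSBell

variable (S : Scenario)

/-- Counting form of the marginal over the complement of a single party. -/
lemma marg_compl_eq_sum_update (p : Behaviour S) (x : InputString S) (k : S.I)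
    (a : OutputString S x) :
    marg S p x ({k}ᶜ) a = ∑ o : S.O k (x k), p x (Function.update a k o) := by
  have step : marg S p x ({k}ᶜ) a = ∑ b : OutputString S x, ∑ o : S.O k (x k),
      (if b = Function.update a k o then p x b else 0) := by
    unfold marg
    refine Finset.sum_congr rfl fun b _ => ?_
    by_cases hcond : ∀ l ∈ ({k}ᶜ : Set S.I), b l = a l
    · rw [if_pos hcond]
      have hb : b = Function.update a k (b k) := by
        funext l
        by_cases hl : l = k
        · subst hl; simp
        · rw [Function.update_of_ne hl]
          exact hcond l (Set.mem_compl_singleton_iff.mpr hl)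
      rw [Finset.sum_eq_single_of_mem (b k) (Finset.mem_univ _)]
      · rw [if_pos hb]
      · intro o _ ho
        rw [if_neg]
        intro hbe
        apply ho
        have := congrFun hbe k
        simp only [Function.update_self] at this
        exact this.symm
    · rw [if_neg hcond, Finset.sum_eq_zero]
      intro o _
      rw [if_neg]
      intro hbe
      apply hcond
      intro l hl
      rw [hbe, Function.update_of_ne (Set.mem_compl_singleton_iff.mp hl)]
  rw [step, Finset.sum_comm]
  refine Finset.sum_congr rfl fun o _ => ?_
  simp

end NSBell
noncomputable section
namespace NSBell
variable (S : Scenario)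

lemma marg_comb (p q : Behaviour S) (c d : ℝ) (x : InputString S) (V : Set S.I)
    (b : OutputString S x) :
    marg S (c • p + d • q) x V b = c * marg S p x V b + d * marg S q x V b := by
  unfold marg
  rw [Finset.mul_sum, Finset.mul_sum, ← Finset.sum_add_distrib]
  refine Finset.sum_congr rfl fun b' _ => ?_
  by_cases h : ∀ i ∈ V, b' i = b i
  · rw [if_pos h, if_pos h, if_pos h]; simp [mul_comm]
  · rw [if_neg h, if_neg h, if_neg h]; ring

lemma nsset_convex : Convex ℝ (NSset S) := by
  intro p hp q hq c d hc hd hcd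
  obtain ⟨⟨hpn, hps⟩, hpns⟩ := hp
  obtain ⟨⟨hqn, hqs⟩, hqns⟩ := hq
  refine ⟨⟨fun x a => ?_, fun x => ?_⟩, ?_⟩
  · have : (c • p + d • q) x a = c * p x a + d * q x a := by simp [mul_comm]
    rw [this]
    exact add_nonneg (mul_nonneg hc (hpn x a)) (mul_nonneg hd (hqn x a))
  · have : ∀ a, (c • p + d • q) x a = c * p x a + d * q x a := fun a => by simp [mul_comm]
    simp only [this]
    rw [Finset.sum_add_distrib, ← Finset.mul_sum, ← Finset.mul_sum, hps, hqs]
    simpa using hcd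
  · intro i x m a a' ha
    rw [marg_comb, marg_comb, hpns i x m a a' ha, hqns i x m a a' ha]

lemma bell_subset_ns : BellSet S ⊆ NSset S :=
  convexHull_min (fun p hp => ⟨hp.1, hp.2.1⟩) (nsset_convex S)

end NSBell
noncomputable section
namespace NSBell

/-- Collapse a sum over a pi type with all coordinates except `k` pinned. -/
lemma sum_fiber {ι : Type} [Fintype ι] [DecidableEq ι] {β : ι → Type}
    [∀ i, Fintype (β i)] (k : ι) (a₀ : ∀ j, β j) (F : (∀ j, β j) → ℝ) :
    ∑ b : ∀ j, β j, (if ∀ j, j ≠ k → b j = a₀ j then F b else 0)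
      = ∑ o : β k, F (Function.update a₀ k o) := by
  have key : ∀ b : ∀ j, β j,
      (if ∀ j, j ≠ k → b j = a₀ j then F b else 0)
        = ∑ o : β k, if b = Function.update a₀ k o then F b else 0 := by
    intro b
    by_cases hcond : ∀ j, j ≠ k → b j = a₀ j
    · rw [if_pos hcond]
      have hb : b = Function.update a₀ k (b k) := by
        funext l
        by_cases hl : l = k
        · subst hl; simp
        · rw [Function.update_of_ne hl]; exact hcond l hl
      rw [Finset.sum_eq_single_of_mem (b k) (Finset.mem_univ _)]
      · rw [if_pos hb]
      · intro o _ ho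
        rw [if_neg]
        intro hbe
        apply ho
        have := congrFun hbe k
        simp only [Function.update_self] at this
        exact this.symm
    · rw [if_neg hcond, Finset.sum_eq_zero]
      intro o _
      rw [if_neg]
      intro hbe
      apply hcond
      intro l hl
      rw [hbe, Function.update_of_ne hl]
  calc ∑ b : ∀ j, β j, (if ∀ j, j ≠ k → b j = a₀ j then F b else 0)
      = ∑ b : ∀ j, β j, ∑ o : β k, (if b = Function.update a₀ k o then F b else 0) :=
        Finset.sum_congr rfl fun b _ => key b
    _ = ∑ o : β k, ∑ b : ∀ j, β j, (if b = Function.update a₀ k o then F b else 0) :=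
        Finset.sum_comm
    _ = ∑ o : β k, F (Function.update a₀ k o) := by
        refine Finset.sum_congr rfl fun o _ => ?_
        simp

/-- Collapse a sum over a pi type of a product with one coordinate pinned, given the
single-coordinate sums are all 1. -/
lemma sum_pick {ι : Type} [Fintype ι] [DecidableEq ι] {β : ι → Type}
    [∀ i, Fintype (β i)] (c : ∀ i, β i → ℝ) (hc : ∀ i, ∑ o : β i, c i o = 1)
    (m₀ : ι) (v : β m₀) :
    ∑ f : ∀ i, β i, (if f m₀ = v then ∏ m, c m (f m) else 0) = c m₀ v := by
  have key : ∀ f : ∀ i, β i,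
      (if f m₀ = v then ∏ m, c m (f m) else 0)
        = ∏ m, (if (h : m = m₀) → HEq (f m) v then c m (f m) else 0) := by
    intro f
    by_cases hf : f m₀ = v
    · rw [if_pos hf]
      refine Finset.prod_congr rfl fun m _ => ?_
      rw [if_pos]
      intro h
      subst h
      exact heq_of_eq hf
    · rw [if_neg hf]
      refine (Finset.prod_eq_zero (Finset.mem_univ m₀) ?_).symm
      rw [if_neg]
      intro hcond
      exact hf (eq_of_heq (hcond rfl))
  calc ∑ f : ∀ i, β i, (if f m₀ = v then ∏ m, c m (f m) else 0)
      = ∑ f : ∀ i, β i, ∏ m, (if (h : m = m₀) → HEq (f m) v then c m (f m) else 0) :=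
        Finset.sum_congr rfl fun f _ => key f
    _ = ∏ m, ∑ o : β m, (if (h : m = m₀) → HEq o v then c m o else 0) := by
        rw [Finset.prod_univ_sum]
        rw [← Fintype.piFinset_univ]
    _ = c m₀ v := by
        rw [Finset.prod_eq_single m₀]
        · rw [Finset.sum_eq_single_of_mem v (Finset.mem_univ v)]
          · rw [if_pos (fun _ => HEq.rfl)]
          · intro o _ ho
            rw [if_neg]
            intro hcond
            exact ho (eq_of_heq (hcond rfl))
        · intro m _ hm
          rw [Finset.sum_congr rfl (fun o _ => if_pos (fun h => absurd h hm))]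
          exact hc m
        · intro h
          exact absurd (Finset.mem_univ m₀) h

lemma eq_iff_of_heq {α β : Type} (e : α = β) {g a : α} {g' a' : β}
    (hg : HEq g g') (ha : HEq a a') : (g = a) ↔ (g' = a') := by
  subst e
  rw [eq_of_heq hg, eq_of_heq ha]

variable (S : Scenario)

lemma p_congr (p : Behaviour S) {x x' : InputString S} (h : x = x')
    {a : OutputString S x} {a' : OutputString S x'} (ha : HEq a a') :
    p x a = p x' a' := by
  subst h
  rw [eq_of_heq ha]

lemma marg_congr' (p : Behaviour S) {x x' : InputString S} (h : x = x') (V : Set S.I)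
    {a : OutputString S x} {a' : OutputString S x'} (ha : HEq a a') :
    marg S p x V a = marg S p x' V a' := by
  subst h
  rw [eq_of_heq ha]

lemma marg_congr (p : Behaviour S) (x : InputString S) (V : Set S.I)
    {a a' : OutputString S x} (ha : ∀ j ∈ V, a j = a' j) :
    marg S p x V a = marg S p x V a' := by
  unfold marg
  refine Finset.sum_congr rfl fun b _ => ?_
  refine if_congr ?_ rfl rfl
  constructor
  · intro h i hi; rw [← ha i hi]; exact h i hi
  · intro h i hi; rw [ha i hi]; exact h i hi

lemma marg_nonneg (p : Behaviour S) (hp : ∀ x a, 0 ≤ p x a) (x : InputString S)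
    (V : Set S.I) (a : OutputString S x) : 0 ≤ marg S p x V a := by
  unfold marg
  refine Finset.sum_nonneg fun b _ => ?_
  by_cases h : ∀ i ∈ V, b i = a i
  · rw [if_pos h]; exact hp x b
  · rw [if_neg h]

lemma le_marg_compl (p : Behaviour S) (hp : ∀ x a, 0 ≤ p x a) (x : InputString S)
    (k : S.I) (a : OutputString S x) : p x a ≤ marg S p x ({k}ᶜ) a := by
  rw [marg_compl_eq_sum_update]
  have := Finset.single_le_sum (f := fun o => p x (Function.update a k o))
    (fun o _ => hp x _) (Finset.mem_univ (a k))
  simpa using this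

end NSBell
noncomputable section
namespace NSBell
section Pivot

variable (S : Scenario) (i₀ : S.I)

/-- A fixed reference input string. -/
def xbar : InputString S := fun _ => Classical.arbitrary _

/-- The reference input string with party `i₀`'s input replaced by `m`. -/
def xm (m : S.M i₀) : InputString S := Function.update (xbar S) i₀ m

/-- Transport of a reference output string to the input `xm m` (junk at `i₀`). -/
def castB (m : S.M i₀) (b : OutputString S (xbar S)) : OutputString S (xm S i₀ m) :=
  fun j => if h : j = i₀ then Classical.arbitrary _
    else cast (congrArg (S.O j) (Function.update_of_ne h m (xbar S)).symm) (b j)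

lemma castB_heq (m : S.M i₀) (b : OutputString S (xbar S)) {j : S.I} (h : j ≠ i₀) :
    HEq (b j) (castB S i₀ m b j) := by
  unfold castB
  rw [dif_neg h]
  exact (cast_heq _ _).symm

/-- The marginal of `p` on the parties other than `i₀` at the reference input. -/
def mu (p : Behaviour S) (b : OutputString S (xbar S)) : ℝ :=
  marg S p (xbar S) ({i₀}ᶜ) b

/-- Conditional distribution of `i₀`'s output given the others' outputs, at input `m`. -/
def cc (p : Behaviour S) (m : S.M i₀) (b : OutputString S (xbar S))
    (o : S.O i₀ (xm S i₀ m i₀)) : ℝ :=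
  if mu S i₀ p b = 0 then (if o = Classical.arbitrary _ then 1 else 0)
  else p (xm S i₀ m) (Function.update (castB S i₀ m b) i₀ o) / mu S i₀ p b

/-- Hidden variables: outputs for all parties at the reference input, together with an
output for party `i₀` for each of its inputs. -/
abbrev Lam : Type :=
  (OutputString S (xbar S)) × (∀ m : S.M i₀, S.O i₀ (xm S i₀ m i₀))

/-- The weight of a hidden variable. -/
def wgt (p : Behaviour S) (bf : Lam S i₀) : ℝ :=
  (mu S i₀ p bf.1 / (Fintype.card (S.O i₀ (xbar S i₀)))) * ∏ m, cc S i₀ p m bf.1 (bf.2 m)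

/-- The deterministic behaviour associated with a hidden variable. -/
def qdet (bf : Lam S i₀) : Behaviour S := fun x a =>
  if (∀ j, j ≠ i₀ → HEq (a j) (bf.1 j)) ∧ HEq (a i₀) (bf.2 (x i₀)) then 1 else 0

variable (hsub : ∀ j, j ≠ i₀ → Subsingleton (S.M j))

/-- The unique output string of `qdet bf` at input `x`. -/
def aStar (bf : Lam S i₀) (x : InputString S) : OutputString S x := fun j =>
  if h : j = i₀ then
    cast (show S.O i₀ (xm S i₀ (x i₀) i₀) = S.O j (x j) by
      subst h; rw [xm, Function.update_self]) (bf.2 (x i₀))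
  else
    cast (congrArg (S.O j) (@Subsingleton.elim _ (hsub j h) (xbar S j) (x j))) (bf.1 j)

lemma aStar_heq_f (bf : Lam S i₀) (x : InputString S) :
    HEq (aStar S i₀ hsub bf x i₀) (bf.2 (x i₀)) := by
  unfold aStar
  rw [dif_pos rfl]
  exact cast_heq _ _

lemma aStar_heq_b (bf : Lam S i₀) (x : InputString S) {j : S.I} (h : j ≠ i₀) :
    HEq (aStar S i₀ hsub bf x j) (bf.1 j) := by
  unfold aStar
  rw [dif_neg h]
  exact cast_heq _ _

lemma qdet_eq (bf : Lam S i₀) (x : InputString S) (a : OutputString S x) :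
    qdet S i₀ bf x a = if a = aStar S i₀ hsub bf x then 1 else 0 := by
  unfold qdet
  refine if_congr ?_ rfl rfl
  constructor
  · rintro ⟨hb, hf⟩
    funext j
    by_cases h : j = i₀
    · subst h
      exact eq_of_heq (hf.trans (aStar_heq_f S j hsub bf x).symm)
    · exact eq_of_heq ((hb j h).trans (aStar_heq_b S i₀ hsub bf x h).symm)
  · rintro rfl
    exact ⟨fun j h => aStar_heq_b S i₀ hsub bf x h,
      aStar_heq_f S i₀ hsub bf x⟩

lemma marg_qdet (bf : Lam S i₀) (x : InputString S) (k : S.I) (a : OutputString S x) :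
    marg S (qdet S i₀ bf) x ({k}ᶜ) a
      = if (∀ l, l ≠ k → aStar S i₀ hsub bf x l = a l) then 1 else 0 := by
  rw [marg_compl_eq_sum_update]
  simp only [qdet_eq S i₀ hsub]
  by_cases hagree : ∀ l, l ≠ k → aStar S i₀ hsub bf x l = a l
  · rw [if_pos hagree, Finset.sum_eq_single_of_mem (aStar S i₀ hsub bf x k)
      (Finset.mem_univ _)]
    · rw [if_pos]
      funext l
      by_cases hl : l = k
      · subst hl; simp
      · rw [Function.update_of_ne hl]
        exact (hagree l hl).symm
    · intro o _ ho
      rw [if_neg]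
      intro hbe
      apply ho
      have := congrFun hbe k
      simpa using this
  · rw [if_neg hagree, Finset.sum_eq_zero]
    intro o _
    rw [if_neg]
    intro hbe
    apply hagree
    intro l hl
    rw [← congrFun hbe l, Function.update_of_ne hl]

include hsub in
lemma qdet_mem_pns (bf : Lam S i₀) : qdet S i₀ bf ∈ PNS S := by
  refine ⟨⟨fun x a => ?_, fun x => ?_⟩, ?_, fun x a => ?_⟩
  · unfold qdet
    split <;> norm_num
  · simp only [qdet_eq S i₀ hsub]
    simp
  · intro k x m a a' ha
    rw [marg_qdet S i₀ hsub, marg_qdet S i₀ hsub]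
    refine if_congr ?_ rfl rfl
    have hstar : ∀ l, l ≠ k →
        HEq (aStar S i₀ hsub bf x l) (aStar S i₀ hsub bf (Function.update x k m) l) := by
      intro l hl
      by_cases hli : l = i₀
      · subst hli
        have hxx : Function.update x k m l = x l := Function.update_of_ne hl m x
        refine (aStar_heq_f S l hsub bf x).trans
          (HEq.trans ?_ (aStar_heq_f S l hsub bf (Function.update x k m)).symm)
        rw [hxx]
      · exact (aStar_heq_b S i₀ hsub bf x hli).trans
          (aStar_heq_b S i₀ hsub bf (Function.update x k m) hli).symm
    constructor
    · intro h l hl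
      refine eq_of_heq (((hstar l hl).symm.trans ?_).trans (ha l hl))
      exact heq_of_eq (h l hl)
    · intro h l hl
      refine eq_of_heq (((hstar l hl).trans ?_).trans (ha l hl).symm)
      exact heq_of_eq (h l hl)
  · unfold qdet
    split
    · right; rfl
    · left; rfl

end Pivot
end NSBell
noncomputable section
namespace NSBell

lemma heq_iff_eq_cast {α β : Type} (e : α = β) (a : α) (b : β) :
    HEq a b ↔ b = cast e a := by
  subst e
  rw [cast_eq, heq_iff_eq, eq_comm]

section Pivot2

variable (S : Scenario) (i₀ : S.I)

lemma csum (p : Behaviour S) (hp : p ∈ NSset S) (m : S.M i₀)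
    (b : OutputString S (xbar S)) : ∑ o, cc S i₀ p m b o = 1 := by
  unfold cc
  by_cases hmu : mu S i₀ p b = 0
  · simp [hmu]
  · simp only [if_neg hmu]
    rw [← Finset.sum_div]
    rw [show ∑ o, p (xm S i₀ m) (Function.update (castB S i₀ m b) i₀ o)
        = marg S p (xm S i₀ m) ({i₀}ᶜ) (castB S i₀ m b) from
      (marg_compl_eq_sum_update S p (xm S i₀ m) i₀ (castB S i₀ m b)).symm]
    rw [show marg S p (xm S i₀ m) ({i₀}ᶜ) (castB S i₀ m b) = mu S i₀ p b from
      (hp.2 i₀ (xbar S) m b (castB S i₀ m b) (fun j hj => castB_heq S i₀ m b hj)).symm]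
    exact div_self hmu

lemma mu_nonneg (p : Behaviour S) (hp : ∀ x a, 0 ≤ p x a)
    (b : OutputString S (xbar S)) : 0 ≤ mu S i₀ p b :=
  marg_nonneg S p hp _ _ _

lemma cc_nonneg (p : Behaviour S) (hp : ∀ x a, 0 ≤ p x a) (m : S.M i₀)
    (b : OutputString S (xbar S)) (o : S.O i₀ (xm S i₀ m i₀)) :
    0 ≤ cc S i₀ p m b o := by
  unfold cc
  split
  · split <;> norm_num
  · exact div_nonneg (hp _ _) (mu_nonneg S i₀ p hp b)

lemma wgt_nonneg (p : Behaviour S) (hp : ∀ x a, 0 ≤ p x a) (bf : Lam S i₀) :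
    0 ≤ wgt S i₀ p bf := by
  refine mul_nonneg (div_nonneg (mu_nonneg S i₀ p hp _) (Nat.cast_nonneg _)) ?_
  exact Finset.prod_nonneg fun m _ => cc_nonneg S i₀ p hp m _ _

lemma prod_cc_sum (p : Behaviour S) (hp : p ∈ NSset S) (b : OutputString S (xbar S)) :
    ∑ f : ∀ m : S.M i₀, S.O i₀ (xm S i₀ m i₀), ∏ m, cc S i₀ p m b (f m) = 1 := by
  rw [← Fintype.piFinset_univ, ← Finset.prod_univ_sum]
  rw [Finset.prod_congr rfl fun m _ => csum S i₀ p hp m b]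
  exact Finset.prod_const_one

lemma sum_mu (p : Behaviour S) (hp : p ∈ NSset S) :
    ∑ b : OutputString S (xbar S), mu S i₀ p b
      = (Fintype.card (S.O i₀ (xbar S i₀)) : ℝ) := by
  have h1 : ∀ b, mu S i₀ p b = ∑ o, p (xbar S) (Function.update b i₀ o) := fun b =>
    marg_compl_eq_sum_update S p (xbar S) i₀ b
  simp only [h1]
  have h2 : ∑ z : (OutputString S (xbar S)) × (S.O i₀ (xbar S i₀)),
      p (xbar S) (Function.update z.1 i₀ z.2)
      = ∑ x : OutputString S (xbar S), ∑ o : S.O i₀ (xbar S i₀),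
          p (xbar S) (Function.update x i₀ o) := by
    exact Fintype.sum_prod_type
      (f := fun z : (OutputString S (xbar S)) × (S.O i₀ (xbar S i₀)) =>
        p (xbar S) (Function.update z.1 i₀ z.2))
  rw [← h2]
  have hinv : Function.Involutive
      (fun z : (OutputString S (xbar S)) × (S.O i₀ (xbar S i₀)) =>
        ((Function.update z.1 i₀ z.2, z.1 i₀) :
          (OutputString S (xbar S)) × (S.O i₀ (xbar S i₀)))) := by
    rintro ⟨b, o⟩
    refine Prod.ext ?_ (by simp)
    funext j
    by_cases hj : j = i₀
    · subst hj; simp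
    · simp [Function.update_of_ne hj]
  rw [Fintype.sum_bijective _ hinv.bijective _ (fun z => p (xbar S) z.1) (fun z => rfl)]
  rw [Fintype.sum_prod_type_right]
  rw [Finset.sum_congr rfl fun o _ => hp.1.2 (xbar S)]
  simp

lemma wgt_sum (p : Behaviour S) (hp : p ∈ NSset S) :
    ∑ bf : Lam S i₀, wgt S i₀ p bf = 1 := by
  unfold wgt
  rw [Fintype.sum_prod_type]
  have : ∀ b : OutputString S (xbar S),
      ∑ f : ∀ m : S.M i₀, S.O i₀ (xm S i₀ m i₀),
        (mu S i₀ p b / (Fintype.card (S.O i₀ (xbar S i₀)))) * ∏ m, cc S i₀ p m b (f m)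
      = mu S i₀ p b / (Fintype.card (S.O i₀ (xbar S i₀))) := by
    intro b
    rw [← Finset.mul_sum, prod_cc_sum S i₀ p hp b, mul_one]
  simp only [this]
  rw [← Finset.sum_div, sum_mu S i₀ p hp]
  exact div_self (by positivity)

end Pivot2
end NSBell
noncomputable section
namespace NSBell
section Pivot3

variable (S : Scenario) (i₀ : S.I)

lemma xm_apply_self (m : S.M i₀) : xm S i₀ m i₀ = m :=
  Function.update_self i₀ m (xbar S)

/-- The canonical value of party `i₀`'s output, transported to `xm (x i₀)`. -/
def vAux (x : InputString S) (a : OutputString S x) : S.O i₀ (xm S i₀ (x i₀) i₀) :=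
  cast ((congrArg (S.O i₀) (xm_apply_self S i₀ (x i₀))).symm) (a i₀)

lemma vAux_spec (x : InputString S) (a : OutputString S x)
    (o : S.O i₀ (xm S i₀ (x i₀) i₀)) :
    o = vAux S i₀ x a ↔ HEq (a i₀) o :=
  (heq_iff_eq_cast _ _ _).symm

variable (hsub : ∀ j, j ≠ i₀ → Subsingleton (S.M j))

/-- The canonical values of the other parties' outputs at the reference input. -/
def bAux (x : InputString S) (a : OutputString S x) : OutputString S (xbar S) := fun j =>
  if h : j = i₀ then Classical.arbitrary _
  else cast (congrArg (S.O j) (@Subsingleton.elim _ (hsub j h) (x j) (xbar S j))) (a j)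

lemma bAux_spec (x : InputString S) (a : OutputString S x) {j : S.I} (h : j ≠ i₀)
    (bj : S.O j (xbar S j)) :
    bj = bAux S i₀ hsub x a j ↔ HEq (a j) bj := by
  unfold bAux
  rw [dif_neg h]
  exact (heq_iff_eq_cast _ _ _).symm

lemma mu_update (p : Behaviour S) (b : OutputString S (xbar S))
    (o : S.O i₀ (xbar S i₀)) :
    mu S i₀ p (Function.update b i₀ o) = mu S i₀ p b :=
  marg_congr S p _ _ fun j hj =>
    Function.update_of_ne (Set.mem_compl_singleton_iff.mp hj) o b

lemma castB_update (m : S.M i₀) (b : OutputString S (xbar S))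
    (o : S.O i₀ (xbar S i₀)) :
    castB S i₀ m (Function.update b i₀ o) = castB S i₀ m b := by
  funext j
  unfold castB
  by_cases h : j = i₀
  · rw [dif_pos h, dif_pos h]
  · rw [dif_neg h, dif_neg h, Function.update_of_ne h]

lemma cc_update (p : Behaviour S) (m : S.M i₀) (b : OutputString S (xbar S))
    (o : S.O i₀ (xbar S i₀)) (w : S.O i₀ (xm S i₀ m i₀)) :
    cc S i₀ p m (Function.update b i₀ o) w = cc S i₀ p m b w := by
  unfold cc
  rw [mu_update, castB_update]

include hsub in
lemma decomposition (p : Behaviour S) (hp : p ∈ NSset S) :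
    p = ∑ bf : Lam S i₀, wgt S i₀ p bf • qdet S i₀ bf := by
  have hpn : ∀ x a, 0 ≤ p x a := hp.1.1
  funext x a
  set K : ℝ := (Fintype.card (S.O i₀ (xbar S i₀)) : ℝ) with hK
  have hKpos : 0 < K := by rw [hK]; exact_mod_cast Fintype.card_pos
  set bA := bAux S i₀ hsub x a with hbA
  set v := vAux S i₀ x a with hv
  -- the right-hand side as a double sum
  rw [show (∑ bf : Lam S i₀, wgt S i₀ p bf • qdet S i₀ bf) x a
      = ∑ bf : Lam S i₀, wgt S i₀ p bf * qdet S i₀ bf x a from by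
    simp [Finset.sum_apply]]
  rw [Fintype.sum_prod_type]
  -- collapse the inner sum over `f`
  have inner : ∀ b : OutputString S (xbar S),
      (∑ f : ∀ m : S.M i₀, S.O i₀ (xm S i₀ m i₀),
        wgt S i₀ p (b, f) * qdet S i₀ (b, f) x a)
      = if ∀ j, j ≠ i₀ → b j = bA j then
          (mu S i₀ p b / K) * cc S i₀ p (x i₀) b v else 0 := by
    intro b
    by_cases hbc : ∀ j, j ≠ i₀ → HEq (a j) (b j)
    · rw [if_pos (fun j h => (bAux_spec S i₀ hsub x a h (b j)).mpr (hbc j h))]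
      have hper : ∀ f : ∀ m : S.M i₀, S.O i₀ (xm S i₀ m i₀),
          wgt S i₀ p (b, f) * qdet S i₀ (b, f) x a
            = (mu S i₀ p b / K) *
              (if f (x i₀) = v then ∏ m, cc S i₀ p m b (f m) else 0) := by
        intro f
        simp only [wgt, qdet]
        rw [if_congr ((and_iff_right hbc).trans
          (vAux_spec S i₀ x a (f (x i₀))).symm) rfl rfl]
        by_cases hf : f (x i₀) = v
        · rw [if_pos hf, if_pos hf, mul_one]
        · rw [if_neg hf, if_neg hf, mul_zero, mul_zero]
      rw [Finset.sum_congr rfl fun f _ => hper f, ← Finset.mul_sum]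
      rw [sum_pick (fun m o => cc S i₀ p m b o) (fun m => csum S i₀ p hp m b) (x i₀) v]
    · rw [if_neg (fun hall => hbc fun j h =>
        (bAux_spec S i₀ hsub x a h (b j)).mp (hall j h))]
      refine Finset.sum_eq_zero fun f _ => ?_
      have : qdet S i₀ (b, f) x a = 0 := by
        unfold qdet
        rw [if_neg]
        rintro ⟨h1, _⟩
        exact hbc h1
      rw [this, mul_zero]
  rw [Finset.sum_congr rfl fun b _ => inner b]
  rw [sum_fiber i₀ bA (fun b => (mu S i₀ p b / K) * cc S i₀ p (x i₀) b v)]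
  have hGupd : ∀ o : S.O i₀ (xbar S i₀),
      (mu S i₀ p (Function.update bA i₀ o) / K) * cc S i₀ p (x i₀)
          (Function.update bA i₀ o) v
        = (mu S i₀ p bA / K) * cc S i₀ p (x i₀) bA v := by
    intro o
    rw [mu_update, cc_update]
  rw [Finset.sum_congr rfl fun o _ => hGupd o]
  rw [Finset.sum_const, Finset.card_univ, nsmul_eq_mul, ← hK]
  rw [show K * ((mu S i₀ p bA / K) * cc S i₀ p (x i₀) bA v)
      = mu S i₀ p bA * cc S i₀ p (x i₀) bA v from by
    field_simp]
  -- the final identification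
  have hx : xm S i₀ (x i₀) = x := by
    funext j
    by_cases h : j = i₀
    · subst h
      exact xm_apply_self S j (x j)
    · rw [xm, Function.update_of_ne h]
      exact @Subsingleton.elim _ (hsub j h) _ _
  set a' : OutputString S (xm S i₀ (x i₀)) :=
    Function.update (castB S i₀ (x i₀) bA) i₀ v with ha'def
  have ha'j : ∀ j, j ≠ i₀ → HEq (bA j) (a' j) := by
    intro j h
    rw [ha'def, Function.update_of_ne h]
    exact castB_heq S i₀ (x i₀) bA h
  have ha' : HEq a' a := by
    refine Function.hfunext rfl ?_
    intro j j' hj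
    have hjj : j = j' := eq_of_heq hj
    subst hjj
    by_cases h : j = i₀
    · rw [h, ha'def, Function.update_self]
      exact ((vAux_spec S i₀ x a v).mp hv).symm
    · exact (ha'j j h).symm.trans
        ((bAux_spec S i₀ hsub x a h (bA j)).mp (by rw [hbA])).symm
  have hmarg : mu S i₀ p bA = marg S p x ({i₀}ᶜ) a := by
    have h1 := hp.2 i₀ (xbar S) (x i₀) bA a' ha'j
    rw [mu, h1]
    exact marg_congr' S p hx _ ha'
  by_cases hmu : mu S i₀ p bA = 0
  · rw [hmu, zero_mul]
    have h1 := le_marg_compl S p hpn x i₀ a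
    rw [← hmarg, hmu] at h1
    exact le_antisymm h1 (hpn x a)
  · rw [show cc S i₀ p (x i₀) bA v = p (xm S i₀ (x i₀)) a' / mu S i₀ p bA from by
      unfold cc
      rw [if_neg hmu]]
    rw [mul_comm, div_mul_cancel₀ _ hmu]
    exact (p_congr S p hx ha').symm

end Pivot3
end NSBell
noncomputable section
namespace NSBell
variable (S : Scenario)

lemma ns_subset_bell_of_subsingleton [Nonempty S.I]
    (h : ({i : S.I | Fintype.card (S.M i) ≠ 1} : Set S.I).Subsingleton) :
    NSset S ⊆ BellSet S := by
  obtain ⟨i₀, hi₀⟩ : ∃ i₀ : S.I, ∀ j, j ≠ i₀ → Subsingleton (S.M j) := by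
    by_cases hne : ({i : S.I | Fintype.card (S.M i) ≠ 1} : Set S.I).Nonempty
    · refine ⟨hne.choose, fun j hj => ?_⟩
      rw [← Fintype.card_le_one_iff_subsingleton]
      by_contra hc
      have hj1 : Fintype.card (S.M j) ≠ 1 := by omega
      exact hj (h hj1 hne.choose_spec)
    · refine ⟨Classical.arbitrary _, fun j _ => ?_⟩
      rw [← Fintype.card_le_one_iff_subsingleton]
      by_contra hc
      exact hne ⟨j, by simp only [Set.mem_setOf_eq]; omega⟩
  intro p hp
  rw [decomposition S i₀ hi₀ p hp]
  have hmem := Finset.centerMass_mem_convexHull (t := Finset.univ)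
    (w := wgt S i₀ p) (z := qdet S i₀)
    (fun bf _ => wgt_nonneg S i₀ p hp.1.1 bf)
    (by rw [wgt_sum S i₀ p hp]; norm_num)
    (fun bf _ => qdet_mem_pns S i₀ hi₀ bf)
  rwa [Finset.centerMass_eq_of_sum_1 _ _ (wgt_sum S i₀ p hp)] at hmem

end NSBell
noncomputable section
namespace NSBell
section PR

variable (S : Scenario)

lemma ite_irrel {P : Prop} (i1 i2 : Decidable P) (u v : ℝ) :
    @ite ℝ P i1 u v = @ite ℝ P i2 u v := by
  cases Subsingleton.elim i1 i2
  rfl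

lemma exists_pair_O (k : S.I) (m : S.M k) : ∃ a b : S.O k m, a ≠ b :=
  Fintype.exists_pair_of_one_lt_card (by have := S.hO k m; omega)

/-- Two distinguished distinct outputs for every input. -/
def oc (k : S.I) (m : S.M k) (s : Bool) : S.O k m :=
  if s then (exists_pair_O S k m).choose else (exists_pair_O S k m).choose_spec.choose

lemma oc_ne (k : S.I) (m : S.M k) : oc S k m true ≠ oc S k m false := by
  unfold oc
  simpa using (exists_pair_O S k m).choose_spec.choose_spec

lemma oc_inj (k : S.I) (m : S.M k) {s s' : Bool} (h : oc S k m s = oc S k m s') :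
    s = s' := by
  cases s <;> cases s' <;> first
    | rfl
    | exact absurd h.symm (oc_ne S k m)
    | exact absurd h (oc_ne S k m)

lemma oc_heq_inj (k : S.I) {m m' : S.M k} (e : m = m') {s s' : Bool}
    (h : HEq (oc S k m s) (oc S k m' s')) : s = s' := by
  subst e
  exact oc_inj S k m (eq_of_heq h)

variable (i j : S.I) (hij : i ≠ j)
variable (mi : Bool → S.M i) (hmi : mi true ≠ mi false)
variable (mj : Bool → S.M j) (hmj : mj true ≠ mj false)

/-- The product of the two "active input" bits. -/
def bt (x : InputString S) : Bool :=
  (if x i = mi true then true else false) && (if x j = mj true then true else false)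

/-- The two output strings supporting the PR box at input `x`. -/
def AA (x : InputString S) (s : Bool) : OutputString S x :=
  Function.update (Function.update (fun k => oc S k (x k) false) i (oc S i (x i) s))
    j (oc S j (x j) (xor s (bt S i j mi mj x)))

include hij in
lemma AA_apply_i (x : InputString S) (s : Bool) : AA S i j mi mj x s i = oc S i (x i) s := by
  unfold AA
  rw [Function.update_of_ne hij, Function.update_self]

lemma AA_apply_j (x : InputString S) (s : Bool) :
    AA S i j mi mj x s j = oc S j (x j) (xor s (bt S i j mi mj x)) := by
  unfold AA
  rw [Function.update_self]

lemma AA_apply_other (x : InputString S) (s : Bool) {k : S.I} (hki : k ≠ i) (hkj : k ≠ j) :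
    AA S i j mi mj x s k = oc S k (x k) false := by
  unfold AA
  rw [Function.update_of_ne hkj, Function.update_of_ne hki]

/-- The PR-box behaviour. -/
def pr : Behaviour S := fun x a =>
  (if a = AA S i j mi mj x false then (1 : ℝ)/2 else 0)
  + (if a = AA S i j mi mj x true then (1 : ℝ)/2 else 0)

lemma pr_nonneg (x : InputString S) (a : OutputString S x) :
    0 ≤ pr S i j mi mj x a := by
  unfold pr
  have h1 : (0:ℝ) ≤ (if a = AA S i j mi mj x false then (1 : ℝ)/2 else 0) := by
    split <;> norm_num
  have h2 : (0:ℝ) ≤ (if a = AA S i j mi mj x true then (1 : ℝ)/2 else 0) := by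
    split <;> norm_num
  linarith

lemma pr_sum (x : InputString S) : ∑ a, pr S i j mi mj x a = 1 := by
  unfold pr
  rw [Finset.sum_add_distrib]
  simp only [Finset.sum_ite_eq', Finset.mem_univ, if_pos]
  norm_num

/-- Generic collapse of a constrained sum against a point mass. -/
lemma sum_ite_ite {α : Type} [Fintype α] (P : α → Prop) (c : α) (u : ℝ) :
    ∑ b, (if P b then (if b = c then u else 0) else 0) = if P c then u else 0 := by
  rw [Finset.sum_eq_single_of_mem c (Finset.mem_univ c)]
  · rw [if_pos rfl]
  · intro b _ hb
    rw [if_neg hb, ite_self]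

lemma marg_pr (x : InputString S) (k : S.I) (a : OutputString S x) :
    marg S (pr S i j mi mj) x ({k}ᶜ) a
      = ∑ s : Bool, (if (∀ l, l ≠ k → AA S i j mi mj x s l = a l) then (1:ℝ)/2 else 0) := by
  have step : marg S (pr S i j mi mj) x ({k}ᶜ) a
      = ∑ b : OutputString S x, ∑ s : Bool, (if ∀ l, l ≠ k → b l = a l then
          (if b = AA S i j mi mj x s then (1 : ℝ)/2 else 0) else 0) := by
    unfold marg pr
    refine Finset.sum_congr rfl fun b _ => ?_
    have hmem : (∀ l ∈ ({k}ᶜ : Set S.I), b l = a l) ↔ (∀ l, l ≠ k → b l = a l) := by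
      constructor
      · intro h l hl; exact h l (Set.mem_compl_singleton_iff.mpr hl)
      · intro h l hl; exact h l (Set.mem_compl_singleton_iff.mp hl)
    rw [Fintype.sum_bool]
    by_cases h : ∀ l, l ≠ k → b l = a l
    · rw [if_pos (hmem.mpr h), if_pos h, if_pos h, add_comm]
    · rw [if_neg (fun hc => h (hmem.mp hc)), if_neg h, if_neg h, add_zero]
  rw [step, Finset.sum_comm]
  refine Finset.sum_congr rfl fun s _ => ?_
  rw [Finset.sum_eq_single_of_mem (AA S i j mi mj x s) (Finset.mem_univ _)]
  · rw [if_pos rfl]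
  · intro b _ hb
    rw [if_neg hb, ite_self]

end PR
end NSBell
noncomputable section
namespace NSBell
section PR2

variable (S : Scenario) (i j : S.I) (hij : i ≠ j)
variable (mi : Bool → S.M i) (hmi : mi true ≠ mi false)
variable (mj : Bool → S.M j) (hmj : mj true ≠ mj false)

include hij in
lemma pr_ns : NoSignalling S (pr S i j mi mj) := by
  intro k x m a a' ha
  rw [marg_pr, marg_pr]
  set x' := Function.update x k m with hx'
  set d : Bool :=
    if k = i then xor (bt S i j mi mj x) (bt S i j mi mj x') else false with hd
  have hxl : ∀ l, l ≠ k → x' l = x l := fun l hl => Function.update_of_ne hl m x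
  have hAA : ∀ (s : Bool) (l : S.I), l ≠ k →
      HEq (AA S i j mi mj x s l) (AA S i j mi mj x' (xor s d) l) := by
    intro s l hl
    by_cases hli : l = i
    · rw [hli]
      have hki : k ≠ i := fun h => hl (by rw [hli, h])
      have hxi : x' i = x i := hxl i (fun h => hki h.symm)
      rw [AA_apply_i S i j hij mi mj x s, AA_apply_i S i j hij mi mj x' (xor s d)]
      rw [hd, if_neg (fun h => hki h), Bool.xor_false, hxi]
    · by_cases hlj : l = j
      · rw [hlj]
        have hkj : k ≠ j := fun h => hl (by rw [hlj, h])
        have hxj : x' j = x j := hxl j (fun h => hkj h.symm)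
        have hb : xor (xor s d) (bt S i j mi mj x') = xor s (bt S i j mi mj x) := by
          by_cases hki : k = i
          · rw [hd, if_pos hki]
            simp [Bool.xor_assoc]
          · have hbt : bt S i j mi mj x' = bt S i j mi mj x := by
              unfold bt
              rw [hxl i (fun h => hki h.symm), hxj]
            rw [hd, if_neg hki, Bool.xor_false, hbt]
        rw [AA_apply_j S i j mi mj x s, AA_apply_j S i j mi mj x' (xor s d)]
        rw [hb, hxj]
      · rw [AA_apply_other S i j mi mj x s hli hlj,
          AA_apply_other S i j mi mj x' (xor s d) hli hlj, hxl l hl]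
  have hinv : Function.Involutive (fun s : Bool => xor s d) := fun s => by
    simp [Bool.xor_assoc]
  rw [Fintype.sum_bijective (fun s : Bool => xor s d) hinv.bijective _ _ ?_]
  intro s
  refine if_congr ?_ rfl rfl
  constructor
  · intro h l hl
    exact (eq_iff_of_heq (congrArg (S.O l) (hxl l hl).symm)
      (hAA s l hl) (ha l hl)).mp (h l hl)
  · intro h l hl
    exact (eq_iff_of_heq (congrArg (S.O l) (hxl l hl).symm)
      (hAA s l hl) (ha l hl)).mpr (h l hl)

include hij in
lemma pr_mem_ns : pr S i j mi mj ∈ NSset S :=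
  ⟨⟨pr_nonneg S i j mi mj, pr_sum S i j mi mj⟩, pr_ns S i j hij mi mj⟩

end PR2
end NSBell
noncomputable section
namespace NSBell
section Det

variable (S : Scenario)

lemma marg_delta (q : Behaviour S) (g : ∀ x, OutputString S x)
    (hg : ∀ x a, q x a = if a = g x then 1 else 0) (x : InputString S) (k : S.I)
    (a : OutputString S x) :
    marg S q x ({k}ᶜ) a = if (∀ l, l ≠ k → g x l = a l) then 1 else 0 := by
  rw [marg_compl_eq_sum_update]
  simp only [hg]
  by_cases hagree : ∀ l, l ≠ k → g x l = a l
  · rw [if_pos hagree, Finset.sum_eq_single_of_mem (g x k) (Finset.mem_univ _)]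
    · rw [if_pos]
      funext l
      by_cases hl : l = k
      · subst hl; simp
      · rw [Function.update_of_ne hl]
        exact (hagree l hl).symm
    · intro o _ ho
      rw [if_neg]
      intro hbe
      apply ho
      have := congrFun hbe k
      simpa using this
  · rw [if_neg hagree, Finset.sum_eq_zero]
    intro o _
    rw [if_neg]
    intro hbe
    apply hagree
    intro l hl
    rw [← congrFun hbe l, Function.update_of_ne hl]

lemma det_point (q : Behaviour S) (hq : q ∈ PNS S) :
    ∃ g : ∀ x, OutputString S x, ∀ x a, q x a = if a = g x then 1 else 0 := by
  have hex : ∀ x : InputString S, ∃ a₁, ∀ a, q x a = if a = a₁ then 1 else 0 := by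
    intro x
    have hone : ∃ a₁, q x a₁ = 1 := by
      by_contra hc
      push_neg at hc
      have hz : ∀ a, q x a = 0 := fun a => (hq.2.2 x a).resolve_right (hc a)
      have := hq.1.2 x
      rw [Finset.sum_congr rfl fun a _ => hz a, Finset.sum_const_zero] at this
      norm_num at this
    obtain ⟨a₁, ha₁⟩ := hone
    refine ⟨a₁, fun a => ?_⟩
    by_cases h : a = a₁
    · rw [if_pos h, h, ha₁]
    · rw [if_neg h]
      by_contra hc
      have h1 : q x a = 1 := (hq.2.2 x a).resolve_left hc
      have h2 : ∑ b ∈ ({a, a₁} : Finset (OutputString S x)), q x b ≤ ∑ b, q x b :=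
        Finset.sum_le_sum_of_subset_of_nonneg (Finset.subset_univ _)
          (fun b _ _ => by
            rcases hq.2.2 x b with h | h <;> rw [h] <;> norm_num)
      rw [Finset.sum_pair h, h1, ha₁, hq.1.2 x] at h2
      norm_num at h2
  exact ⟨fun x => (hex x).choose, fun x => (hex x).choose_spec⟩

lemma det_heq (q : Behaviour S) (hqns : NoSignalling S q) (g : ∀ x, OutputString S x)
    (hg : ∀ x a, q x a = if a = g x then 1 else 0) (k : S.I) (x : InputString S)
    (m : S.M k) (l : S.I) (hl : l ≠ k) :
    HEq (g (Function.update x k m) l) (g x l) := by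
  set x' := Function.update x k m with hx'
  set a' : OutputString S x' := fun l' =>
    if h : l' = k then Classical.arbitrary _
    else cast (congrArg (S.O l') (Function.update_of_ne h m x).symm) (g x l') with ha'
  have hns := hqns k x m (g x) a' (fun l' hl' => by
    rw [ha']
    simp only [dif_neg hl']
    exact (cast_heq _ _).symm)
  rw [marg_delta S q g hg, marg_delta S q g hg] at hns
  rw [if_pos (fun l' (_ : l' ≠ k) => rfl)] at hns
  have hcond : ∀ l', l' ≠ k → g x' l' = a' l' := by
    by_contra hc
    rw [if_neg hc] at hns
    norm_num at hns
  have := hcond l hl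
  rw [ha'] at this
  simp only [dif_neg hl] at this
  rw [this]
  exact cast_heq _ _

end Det

section CHSH

variable (S : Scenario) (i j : S.I) (hij : i ≠ j)
variable (mi : Bool → S.M i) (hmi : mi true ≠ mi false)
variable (mj : Bool → S.M j) (hmj : mj true ≠ mj false)

/-- The four CHSH input strings. -/
def xst (s t : Bool) : InputString S :=
  Function.update (Function.update (xbar S) i (mi s)) j (mj t)

include hij in
lemma xst_i (s t : Bool) : xst S i j mi mj s t i = mi s := by
  unfold xst
  rw [Function.update_of_ne hij, Function.update_self]

lemma xst_j (s t : Bool) : xst S i j mi mj s t j = mj t := by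
  unfold xst
  rw [Function.update_self]

include hij hmi hmj in
lemma bt_xst (s t : Bool) : bt S i j mi mj (xst S i j mi mj s t) = (s && t) := by
  unfold bt
  rw [xst_i S i j hij mi mj, xst_j S i j mi mj]
  cases s <;> cases t <;> simp [hmi, hmj, Ne.symm hmi, Ne.symm hmj]

/-- The CHSH winning condition. -/
def W (s t : Bool) (a : OutputString S (xst S i j mi mj s t)) : Prop :=
  ∃ u v : Bool, a i = oc S i (xst S i j mi mj s t i) u
    ∧ a j = oc S j (xst S i j mi mj s t j) v ∧ xor u v = (s && t)

/-- The CHSH functional. -/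
def LL (q : Behaviour S) : ℝ :=
  ∑ s : Bool, ∑ t : Bool, ∑ a : OutputString S (xst S i j mi mj s t),
    (if W S i j mi mj s t a then q (xst S i j mi mj s t) a else 0)

include hij hmi hmj in
lemma W_AA (s t s' : Bool) :
    W S i j mi mj s t (AA S i j mi mj (xst S i j mi mj s t) s') := by
  refine ⟨s', xor s' (bt S i j mi mj (xst S i j mi mj s t)),
    AA_apply_i S i j hij mi mj _ s', AA_apply_j S i j mi mj _ s', ?_⟩
  rw [bt_xst S i j hij mi hmi mj hmj]
  cases s' <;> cases (s && t) <;> rfl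

include hij hmi hmj in
lemma LL_pr : LL S i j mi mj (pr S i j mi mj) = 4 := by
  unfold LL
  have hst : ∀ s t : Bool,
      (∑ a : OutputString S (xst S i j mi mj s t),
        (if W S i j mi mj s t a then pr S i j mi mj (xst S i j mi mj s t) a else 0)) = 1 := by
    intro s t
    have hterm : ∀ a : OutputString S (xst S i j mi mj s t),
        (if W S i j mi mj s t a then pr S i j mi mj (xst S i j mi mj s t) a else 0)
          = pr S i j mi mj (xst S i j mi mj s t) a := by
      intro a
      by_cases hW : W S i j mi mj s t a
      · rw [if_pos hW]
      · rw [if_neg hW]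
        unfold pr
        rw [if_neg, if_neg]
        · norm_num
        · rintro rfl
          exact hW (W_AA S i j hij mi hmi mj hmj s t true)
        · rintro rfl
          exact hW (W_AA S i j hij mi hmi mj hmj s t false)
    rw [Finset.sum_congr rfl fun a _ => hterm a]
    exact pr_sum S i j mi mj _
  rw [Finset.sum_congr rfl fun s _ => Finset.sum_congr rfl fun t _ => hst s t]
  norm_num

end CHSH
end NSBell
noncomputable section
namespace NSBell

lemma bxf {a b : Bool} (h : xor a b = false) : a = b := by
  cases a <;> cases b <;> simp_all

lemma bxt {a b : Bool} (h : xor a b = true) : a ≠ b := by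
  cases a <;> cases b <;> simp_all

section CHSH2

variable (S : Scenario) (i j : S.I) (hij : i ≠ j)
variable (mi : Bool → S.M i) (hmi : mi true ≠ mi false)
variable (mj : Bool → S.M j) (hmj : mj true ≠ mj false)

include hij hmi hmj in
lemma LL_pns_le (q : Behaviour S) (hq : q ∈ PNS S) : LL S i j mi mj q ≤ 3 := by
  obtain ⟨g, hg⟩ := det_point S q hq
  have key : ∀ s t : Bool,
      (∑ a : OutputString S (xst S i j mi mj s t),
          (if W S i j mi mj s t a then q (xst S i j mi mj s t) a else 0))
        = if W S i j mi mj s t (g (xst S i j mi mj s t)) then 1 else 0 := by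
    intro s t
    simp only [hg]
    rw [Finset.sum_eq_single_of_mem (g (xst S i j mi mj s t)) (Finset.mem_univ _)]
    · rw [if_pos rfl]
    · intro b _ hb
      rw [if_neg hb, ite_self]
  have hgi : ∀ s t t' : Bool,
      HEq (g (xst S i j mi mj s t) i) (g (xst S i j mi mj s t') i) := by
    intro s t t'
    have hx : Function.update (xst S i j mi mj s t') j (mj t) = xst S i j mi mj s t := by
      unfold xst
      rw [Function.update_idem]
    have h1 := det_heq S q hq.2.1 g hg j (xst S i j mi mj s t') (mj t) i hij
    rw [hx] at h1
    exact h1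
  have hgj : ∀ s s' t : Bool,
      HEq (g (xst S i j mi mj s t) j) (g (xst S i j mi mj s' t) j) := by
    intro s s' t
    have hx : Function.update (xst S i j mi mj s' t) i (mi s) = xst S i j mi mj s t := by
      unfold xst
      rw [Function.update_comm (Ne.symm hij), Function.update_idem]
    have h1 := det_heq S q hq.2.1 g hg i (xst S i j mi mj s' t) (mi s) j (Ne.symm hij)
    rw [hx] at h1
    exact h1
  have hu : ∀ (s t t' u u' : Bool),
      g (xst S i j mi mj s t) i = oc S i (xst S i j mi mj s t i) u →
      g (xst S i j mi mj s t') i = oc S i (xst S i j mi mj s t' i) u' → u = u' := by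
    intro s t t' u u' h h'
    have hh := hgi s t t'
    rw [h, h'] at hh
    exact oc_heq_inj S i
      ((xst_i S i j hij mi mj s t).trans (xst_i S i j hij mi mj s t').symm) hh
  have hv : ∀ (s s' t v v' : Bool),
      g (xst S i j mi mj s t) j = oc S j (xst S i j mi mj s t j) v →
      g (xst S i j mi mj s' t) j = oc S j (xst S i j mi mj s' t j) v' → v = v' := by
    intro s s' t v v' h h'
    have hh := hgj s s' t
    rw [h, h'] at hh
    exact oc_heq_inj S j
      ((xst_j S i j mi mj s t).trans (xst_j S i j mi mj s' t).symm) hh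
  have hno : ¬ (W S i j mi mj false false (g (xst S i j mi mj false false))
      ∧ W S i j mi mj false true (g (xst S i j mi mj false true))
      ∧ W S i j mi mj true false (g (xst S i j mi mj true false))
      ∧ W S i j mi mj true true (g (xst S i j mi mj true true))) := by
    rintro ⟨⟨u00, v00, hi00, hj00, he00⟩, ⟨u01, v01, hi01, hj01, he01⟩,
      ⟨u10, v10, hi10, hj10, he10⟩, ⟨u11, v11, hi11, hj11, he11⟩⟩
    have q1 : u00 = u01 := hu false false true u00 u01 hi00 hi01
    have q2 : u10 = u11 := hu true false true u10 u11 hi10 hi11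
    have q3 : v00 = v10 := hv false true false v00 v10 hj00 hj10
    have q4 : v01 = v11 := hv false true true v01 v11 hj01 hj11
    have e1 : u00 = v00 := bxf he00
    have e2 : u01 = v01 := bxf he01
    have e3 : u10 = v10 := bxf he10
    have e4 : u11 ≠ v11 := bxt he11
    apply e4
    rw [← q2, ← q4, e3, ← q3, ← e1, q1, e2]
  unfold LL
  rw [Fintype.sum_bool, Fintype.sum_bool, Fintype.sum_bool]
  rw [key true true, key true false, key false true, key false false]
  by_cases h00 : W S i j mi mj false false (g (xst S i j mi mj false false)) <;>
    by_cases h01 : W S i j mi mj false true (g (xst S i j mi mj false true)) <;>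
    by_cases h10 : W S i j mi mj true false (g (xst S i j mi mj true false)) <;>
    by_cases h11 : W S i j mi mj true true (g (xst S i j mi mj true true)) <;>
    first
      | (simp only [h00, h01, h10, h11, ite_true, ite_false, if_true, if_false]; norm_num; done)
      | exact absurd ⟨h00, h01, h10, h11⟩ hno
      | (exfalso; exact hno ⟨h00, h01, h10, h11⟩)

lemma LL_comb (p q : Behaviour S) (c d : ℝ) :
    LL S i j mi mj (c • p + d • q) = c * LL S i j mi mj p + d * LL S i j mi mj q := by
  unfold LL
  have h1 : ∀ (s t : Bool) (a : OutputString S (xst S i j mi mj s t)),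
      (if W S i j mi mj s t a then (c • p + d • q) (xst S i j mi mj s t) a else 0)
        = c * (if W S i j mi mj s t a then p (xst S i j mi mj s t) a else 0)
          + d * (if W S i j mi mj s t a then q (xst S i j mi mj s t) a else 0) := by
    intro s t a
    simp only [Pi.add_apply, Pi.smul_apply, smul_eq_mul]
    split <;> ring
  simp only [h1, Finset.sum_add_distrib, ← Finset.mul_sum]

include hij hmi hmj in
lemma ns_ne_bell : NSset S ≠ BellSet S := by
  intro heq
  have h1 : pr S i j mi mj ∈ NSset S := pr_mem_ns S i j hij mi mj
  rw [heq] at h1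
  have hconv : Convex ℝ {q : Behaviour S | LL S i j mi mj q ≤ 3} := by
    intro p hp q hq c d hc hd hcd
    simp only [Set.mem_setOf_eq] at hp hq ⊢
    rw [LL_comb]
    have hp' := mul_le_mul_of_nonneg_left hp hc
    have hq' := mul_le_mul_of_nonneg_left hq hd
    nlinarith
  have h2 : BellSet S ⊆ {q : Behaviour S | LL S i j mi mj q ≤ 3} :=
    convexHull_min (fun q hq => LL_pns_le S i j hij mi hmi mj hmj q hq) hconv
  have h3 := h2 h1
  simp only [Set.mem_setOf_eq, LL_pr S i j hij mi hmi mj hmj] at h3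
  norm_num at h3

end CHSH2
end NSBell
noncomputable section

/-- `NS(S) = B(S)` if and only if `|M_i| = 1` for all but at most one party `i ∈ I`. -/
theorem ns_eq_bell_iff (S : Scenario) [Nonempty S.I] :
    NSset S = BellSet S ↔
      ({i : S.I | Fintype.card (S.M i) ≠ 1} : Set S.I).Subsingleton := by
  constructor
  · intro heq
    by_contra hsub
    rw [Set.not_subsingleton_iff] at hsub
    obtain ⟨i, hi, j, hj, hij⟩ := hsub
    simp only [Set.mem_setOf_eq] at hi hj
    have h2i : 1 < Fintype.card (S.M i) := by
      have h1 : 0 < Fintype.card (S.M i) := Fintype.card_pos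
      omega
    have h2j : 1 < Fintype.card (S.M j) := by
      have h1 : 0 < Fintype.card (S.M j) := Fintype.card_pos
      omega
    obtain ⟨ai, bi, habi⟩ := Fintype.exists_pair_of_one_lt_card h2i
    obtain ⟨aj, bj, habj⟩ := Fintype.exists_pair_of_one_lt_card h2j
    exact NSBell.ns_ne_bell S i j hij
      (fun s => if s then ai else bi) (by simpa using habi)
      (fun s => if s then aj else bj) (by simpa using habj) heq
  · intro h
    exact Set.Subset.antisymm (NSBell.ns_subset_bell_of_subsingleton S h)
      (NSBell.bell_subset_ns S)

end
end
end
end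
end
end
end
end
end
end
end
end
end

section
/- Let S = (I, M, O) be a nontrivial correlation scenario with at least two parties (|I| ≥ 2, |M_i| ≥ 2 and |O_{x_i}| ≥ 2 for all i, x_i), and let (S', S'^⊥) be a disjoint bipartition of S. Then: (i) P_NS(S') ⊙ P_NS(S'^⊥) = P_NS(S); and (ii) if the bipartition is nonredundant, then B(S') ⊙ B(S'^⊥) ⊊ B(S) and NS(S') ⊙ NS(S'^⊥) ⊊ NS(S) (both inclusions strict). -/
open scoped Classical
open MeasureTheory

noncomputable section

section AuxLemmas

variable {S : Scenario}

/-- generic heq-cast helper -/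
lemma eq_app_congr {α : Type} {O : α → Type} (g : ∀ u, O u) {m m' : α} (h : m = m')
    {a : O m} {a' : O m'} (ha : HEq a a') : (a = g m) ↔ (a' = g m') := by
  subst h; rw [eq_of_heq ha]

lemma heq_iff_heq {α β γ : Sort _} (hβγ : β = γ) {a : α} {b : β} {c : γ}
    (hbc : HEq b c) : HEq a b ↔ HEq a c := by subst hβγ; rw [eq_of_heq hbc]

lemma marg_nonneg {p : Behaviour S} (hp : ∀ x a, 0 ≤ p x a) (x : InputString S)
    (V : Set S.I) (a : OutputString S x) : 0 ≤ marg S p x V a := by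
  refine Finset.sum_nonneg fun b _ => ?_
  split_ifs
  · exact hp x b
  · exact le_refl 0

lemma marg_empty {p : Behaviour S} (hp : IsBehaviour S p) (x : InputString S)
    (a : OutputString S x) : marg S p x ∅ a = 1 := by
  simp only [marg, Set.mem_empty_iff_false, false_implies, implies_true, if_true]
  exact hp.2 x

lemma marg_univ (p : Behaviour S) (x : InputString S) (a : OutputString S x) :
    marg S p x Set.univ a = p x a := by
  rw [marg, Finset.sum_eq_single a]
  · simp
  · intro b _ hb
    rw [if_neg]
    intro h
    exact hb (funext fun i => h i (Set.mem_univ i))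
  · simp

lemma marg_congr (p : Behaviour S) (x : InputString S) (V : Set S.I)
    {a a' : OutputString S x} (h : ∀ i ∈ V, a i = a' i) :
    marg S p x V a = marg S p x V a' := by
  refine Finset.sum_congr rfl fun b _ => ?_
  congr 1
  refine propext (forall_congr' fun i => imp_congr_right fun hi => ?_)
  rw [h i hi]

lemma marg_congr_set (p : Behaviour S) (x : InputString S) {V W : Set S.I}
    (h : V = W) (a : OutputString S x) : marg S p x V a = marg S p x W a := by rw [h]

lemma marg_combo (p q : Behaviour S) (c d : ℝ) (x : InputString S) (V : Set S.I)
    (a : OutputString S x) :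
    marg S (c • p + d • q) x V a = c * marg S p x V a + d * marg S q x V a := by
  simp only [marg, Finset.mul_sum, ← Finset.sum_add_distrib]
  refine Finset.sum_congr rfl fun b _ => ?_
  split_ifs <;> simp

/-- deterministic behaviour given by a local strategy `f` -/
def detB (S : Scenario) (f : ∀ i (m : S.M i), S.O i m) : Behaviour S :=
  fun x a => if a = (fun i => f i (x i)) then 1 else 0

lemma marg_indicator (p : Behaviour S) (x : InputString S) (c : OutputString S x)
    (h : ∀ b, p x b = if b = c then 1 else 0) (V : Set S.I) (a : OutputString S x) :
    marg S p x V a = if (∀ i ∈ V, c i = a i) then 1 else 0 := by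
  rw [marg, Finset.sum_eq_single c]
  · rw [h c, if_pos rfl]
  · intro b _ hb
    rw [h b, if_neg hb]
    simp
  · simp

lemma detB_apply (f : ∀ i (m : S.M i), S.O i m) (x : InputString S) (b : OutputString S x) :
    detB S f x b = if b = (fun i => f i (x i)) then 1 else 0 := rfl

lemma marg_detB (f : ∀ i (m : S.M i), S.O i m) (x : InputString S) (V : Set S.I)
    (a : OutputString S x) :
    marg S (detB S f) x V a = if (∀ i ∈ V, a i = f i (x i)) then 1 else 0 := by
  rw [marg_indicator (detB S f) x _ (fun b => rfl) V a]
  congr 1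
  refine propext (forall_congr' fun i => imp_congr_right fun hi => ?_)
  exact eq_comm

lemma detB_isBehaviour (f : ∀ i (m : S.M i), S.O i m) : IsBehaviour S (detB S f) := by
  constructor
  · intro x a
    rw [detB_apply]
    split_ifs <;> norm_num
  · intro x
    simp [detB_apply]

lemma detB_noSignalling (f : ∀ i (m : S.M i), S.O i m) : NoSignalling S (detB S f) := by
  intro i x m a a' hh
  rw [marg_detB, marg_detB]
  congr 1
  refine propext (forall_congr' fun j => ?_)
  simp only [Set.mem_compl_iff, Set.mem_singleton_iff]
  refine imp_congr_right fun hj => ?_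
  exact eq_app_congr (f j) (Function.update_of_ne hj m x).symm (hh j hj)

lemma detB_mem_PNS (f : ∀ i (m : S.M i), S.O i m) : detB S f ∈ PNS S := by
  refine ⟨detB_isBehaviour f, detB_noSignalling f, fun x a => ?_⟩
  rw [detB_apply]
  split_ifs <;> simp

end AuxLemmas

section AuxLemmas2

variable {S : Scenario}

/-- transport an output string along an input update, pinning coordinate `i` to `o` -/
def updOut (x : InputString S) (i : S.I) (m : S.M i) (o : S.O i m) (a : OutputString S x) :
    OutputString S (Function.update x i m) := fun j =>
  if h : j = i then
    cast (by subst h; exact (congrArg (S.O j) (Function.update_self j m x)).symm) o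
  else cast (congrArg (S.O j) (Function.update_of_ne h m x).symm) (a j)

lemma updOut_heq_ne (x : InputString S) (i : S.I) (m : S.M i) (o : S.O i m)
    (a : OutputString S x) {j : S.I} (hj : j ≠ i) : HEq (updOut x i m o a j) (a j) := by
  rw [updOut, dif_neg hj]; exact cast_heq _ _

lemma updOut_heq_self (x : InputString S) (i : S.I) (m : S.M i) (o : S.O i m)
    (a : OutputString S x) : HEq (updOut x i m o a i) o := by
  rw [updOut, dif_pos rfl]; exact cast_heq _ _

/-- transport an output string back along an input update -/
def downOut (x : InputString S) (i : S.I) (m : S.M i) (o : S.O i (x i))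
    (a : OutputString S (Function.update x i m)) : OutputString S x := fun j =>
  if h : j = i then cast (by subst h; rfl) o
  else cast (congrArg (S.O j) (Function.update_of_ne h m x)) (a j)

lemma downOut_heq_ne (x : InputString S) (i : S.I) (m : S.M i) (o : S.O i (x i))
    (a : OutputString S (Function.update x i m)) {j : S.I} (hj : j ≠ i) :
    HEq (downOut x i m o a j) (a j) := by
  rw [downOut, dif_neg hj]; exact cast_heq _ _

lemma downOut_eq_self (x : InputString S) (i : S.I) (m : S.M i) (o : S.O i (x i))
    (a : OutputString S (Function.update x i m)) : downOut x i m o a i = o := by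
  rw [downOut, dif_pos rfl]; exact eq_of_heq (cast_heq _ _)

/-- the marginal on `V` as a sum of marginals on `{i}ᶜ`, for `i ∉ V` -/
lemma csum (p : Behaviour S) (i : S.I) (x : InputString S) (V : Set S.I) (hiV : i ∉ V)
    (a : OutputString S x) (o0 : S.O i (x i)) :
    marg S p x V a
      = ∑ c : OutputString S x,
          if (∀ j ∈ V, c j = a j) ∧ c i = o0 then marg S p x {i}ᶜ c else 0 := by
  have step1 : ∀ c : OutputString S x,
      (if (∀ j ∈ V, c j = a j) ∧ c i = o0 then marg S p x {i}ᶜ c else 0)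
        = ∑ b : OutputString S x,
            if ((∀ j ∈ V, c j = a j) ∧ c i = o0) ∧ (∀ j ∈ ({i}ᶜ : Set S.I), b j = c j)
              then p x b else 0 := by
    intro c
    by_cases hP : (∀ j ∈ V, c j = a j) ∧ c i = o0
    · rw [if_pos hP, marg]
      simp only [eq_true hP, true_and]
      exact Finset.sum_congr rfl fun b _ => by split_ifs <;> rfl
    · rw [if_neg hP]
      simp only [eq_false hP, false_and, if_false, Finset.sum_const_zero]
  rw [Finset.sum_congr rfl fun c _ => step1 c, Finset.sum_comm]
  rw [marg]
  refine Finset.sum_congr rfl fun b _ => ?_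
  rw [Finset.sum_eq_single (Function.update b i o0)]
  · refine if_congr ?_ rfl rfl
    have h1 : Function.update b i o0 i = o0 := Function.update_self i o0 b
    have h2 : ∀ j ∈ ({i}ᶜ : Set S.I), b j = Function.update b i o0 j := by
      intro j hj
      rw [Function.update_of_ne hj]
    have h3 : (∀ j ∈ V, Function.update b i o0 j = a j) ↔ (∀ j ∈ V, b j = a j) := by
      refine forall_congr' fun j => imp_congr_right fun hj => ?_
      have hji : j ≠ i := by rintro rfl; exact hiV hj
      rw [Function.update_of_ne hji]
    constructor
    · intro hb
      exact ⟨⟨h3.mpr hb, h1⟩, h2⟩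
    · rintro ⟨⟨hc, -⟩, -⟩
      exact h3.mp hc
  · intro c _ hc
    rw [if_neg]
    rintro ⟨⟨-, hci⟩, hcb⟩
    refine hc (funext fun j => ?_)
    by_cases hj : j = i
    · subst hj; rw [hci, Function.update_self]
    · rw [← hcb j hj, Function.update_of_ne hj]
  · simp

/-- single-party no-signalling for marginals on arbitrary `V` not containing `i` -/
lemma ns_marg1 {p : Behaviour S} (hp : NoSignalling S p) (i : S.I) (x : InputString S)
    (m : S.M i) (V : Set S.I) (hiV : i ∉ V) (a : OutputString S x)
    (a' : OutputString S (Function.update x i m)) (hh : ∀ j ∈ V, HEq (a j) (a' j)) :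
    marg S p x V a = marg S p (Function.update x i m) V a' := by
  obtain ⟨o0⟩ : Nonempty (S.O i (x i)) := inferInstance
  obtain ⟨om⟩ : Nonempty (S.O i m) := inferInstance
  obtain ⟨o0', ho0'⟩ : ∃ o0' : S.O i (Function.update x i m i), HEq o0' om :=
    ⟨cast (congrArg (S.O i) (Function.update_self i m x)).symm om, cast_heq _ _⟩
  rw [csum p i x V hiV a o0, csum p i (Function.update x i m) V hiV a' o0']
  have key : ∀ c : OutputString S x,
      marg S p x {i}ᶜ c = marg S p (Function.update x i m) {i}ᶜ (updOut x i m om c) :=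
    fun c => hp i x m c _ (fun j hj => (updOut_heq_ne x i m om c hj).symm)
  calc ∑ c : OutputString S x,
        (if (∀ j ∈ V, c j = a j) ∧ c i = o0 then marg S p x {i}ᶜ c else 0)
      = ∑ c ∈ Finset.univ.filter
            (fun c : OutputString S x => (∀ j ∈ V, c j = a j) ∧ c i = o0),
          marg S p (Function.update x i m) {i}ᶜ (updOut x i m om c) := by
        rw [Finset.sum_filter]
        exact Finset.sum_congr rfl fun c _ => by
          by_cases h : (∀ j ∈ V, c j = a j) ∧ c i = o0 <;> simp [h, key c]
    _ = ∑ c' ∈ Finset.univ.filter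
            (fun c' : OutputString S (Function.update x i m) =>
              (∀ j ∈ V, c' j = a' j) ∧ c' i = o0'),
          marg S p (Function.update x i m) {i}ᶜ c' := by
        refine Finset.sum_nbij' (fun c => updOut x i m om c) (fun c' => downOut x i m o0 c')
          ?_ ?_ ?_ ?_ ?_
        · intro c hc
          rw [Finset.mem_filter] at hc ⊢
          obtain ⟨-, hca, hco⟩ := hc
          refine ⟨Finset.mem_univ _, fun j hj => ?_, ?_⟩
          · have hji : j ≠ i := by rintro rfl; exact hiV hj
            exact eq_of_heq (((updOut_heq_ne x i m om c hji).trans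
              (heq_of_eq (hca j hj))).trans (hh j hj))
          · exact eq_of_heq ((updOut_heq_self x i m om c).trans ho0'.symm)
        · intro c' hc'
          rw [Finset.mem_filter] at hc' ⊢
          obtain ⟨-, hca, hco⟩ := hc'
          refine ⟨Finset.mem_univ _, fun j hj => ?_, ?_⟩
          · have hji : j ≠ i := by rintro rfl; exact hiV hj
            exact eq_of_heq (((downOut_heq_ne x i m o0 c' hji).trans
              (heq_of_eq (hca j hj))).trans (hh j hj).symm)
          · exact downOut_eq_self x i m o0 c'
        · intro c hc
          rw [Finset.mem_filter] at hc
          show downOut x i m o0 (updOut x i m om c) = c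
          funext j
          by_cases hj : j = i
          · subst hj
            rw [downOut_eq_self, hc.2.2]
          · exact eq_of_heq ((downOut_heq_ne x i m o0 _ hj).trans
              (updOut_heq_ne x i m om c hj))
        · intro c' hc'
          rw [Finset.mem_filter] at hc'
          show updOut x i m om (downOut x i m o0 c') = c'
          funext j
          by_cases hj : j = i
          · subst hj
            exact eq_of_heq ((updOut_heq_self _ _ _ _ _).trans
              (ho0'.symm.trans (heq_of_eq hc'.2.2).symm))
          · exact eq_of_heq ((updOut_heq_ne x i m om _ hj).trans
              (downOut_heq_ne x i m o0 c' hj))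
        · intro c _; rfl
    _ = ∑ c' : OutputString S (Function.update x i m),
          (if (∀ j ∈ V, c' j = a' j) ∧ c' i = o0'
            then marg S p (Function.update x i m) {i}ᶜ c' else 0) := by
        rw [Finset.sum_filter]

/-- multi-party no-signalling: the marginal on `V` only depends on the inputs in `V` -/
lemma ns_marg2 {p : Behaviour S} (hp : NoSignalling S p) (V : Set S.I) :
    ∀ (D : Finset S.I) (x y : InputString S), (∀ j ∉ D, x j = y j) → (∀ j ∈ D, j ∉ V) →
      ∀ (a : OutputString S x) (a' : OutputString S y),
        (∀ j ∈ V, HEq (a j) (a' j)) → marg S p x V a = marg S p y V a' := by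
  intro D
  induction D using Finset.induction_on with
  | empty =>
    intro x y hxy _ a a' hh
    have : x = y := funext fun j => hxy j (Finset.notMem_empty j)
    subst this
    exact marg_congr p x V fun j hj => eq_of_heq (hh j hj)
  | @insert k D hk ih =>
    intro x y hxy hDV a a' hh
    have hkV : k ∉ V := hDV k (Finset.mem_insert_self k D)
    obtain ⟨ok⟩ : Nonempty (S.O k (y k)) := inferInstance
    have step : marg S p x V a
        = marg S p (Function.update x k (y k)) V (updOut x k (y k) ok a) :=
      ns_marg1 hp k x (y k) V hkV a _
        (fun j hj => (updOut_heq_ne x k (y k) ok a (by rintro rfl; exact hkV hj)).symm)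
    rw [step]
    refine ih (Function.update x k (y k)) y ?_ (fun j hj => hDV j (Finset.mem_insert_of_mem hj))
      _ a' ?_
    · intro j hj
      by_cases hjk : j = k
      · subst hjk; rw [Function.update_self]
      · rw [Function.update_of_ne hjk]
        exact hxy j (by simp [hjk, hj])
    · intro j hj
      exact ((updOut_heq_ne x k (y k) ok a (by rintro rfl; exact hkV hj)).trans (hh j hj))

/-- convenient form of `ns_marg2` -/
lemma ns_marg {p : Behaviour S} (hp : NoSignalling S p) (V : Set S.I)
    (x y : InputString S) (hxy : ∀ j ∈ V, x j = y j)
    (a : OutputString S x) (a' : OutputString S y)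
    (hh : ∀ j ∈ V, HEq (a j) (a' j)) : marg S p x V a = marg S p y V a' := by
  classical
  refine ns_marg2 hp V (Finset.univ.filter fun j => ¬ x j = y j) x y ?_ ?_ a a' hh
  · intro j hj
    simp only [Finset.mem_filter, Finset.mem_univ, true_and, not_not] at hj
    exact hj
  · intro j hj hjV
    simp only [Finset.mem_filter, Finset.mem_univ, true_and] at hj
    exact hj (hxy j hjV)

end AuxLemmas2

section AuxLemmas3

variable {S : Scenario}


/-- an output string over `y` pinning coordinate `i` to a given output -/
def pinOut (x y : InputString S) (i : S.I) (h : x i = y i) (o : S.O i (x i)) :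
    OutputString S y := fun j =>
  if hji : j = i then cast (by subst hji; exact congrArg (S.O j) h) o
  else Classical.arbitrary _

lemma pinOut_heq (x y : InputString S) (i : S.I) (h : x i = y i) (o : S.O i (x i)) :
    HEq (pinOut x y i h o i) o := by
  rw [pinOut, dif_pos rfl]; exact cast_heq _ _

lemma pns_exists_det {p : Behaviour S} (hp : p ∈ PNS S) :
    ∃ f : ∀ i (m : S.M i), S.O i m, p = detB S f := by
  obtain ⟨⟨hpos, hsum⟩, hns, hpred⟩ := hp
  have hA : ∀ x : InputString S, ∃ c : OutputString S x,
      ∀ b, p x b = if b = c then 1 else 0 := by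
    intro x
    have hs := hsum x
    have h1 : ∃ c, p x c = 1 := by
      by_contra hcon
      push_neg at hcon
      have hz : ∀ b : OutputString S x, p x b = 0 :=
        fun b => (hpred x b).resolve_right (hcon b)
      rw [Finset.sum_congr rfl fun b _ => hz b, Finset.sum_const_zero] at hs
      norm_num at hs
    obtain ⟨c, hc⟩ := h1
    refine ⟨c, fun b => ?_⟩
    by_cases hb : b = c
    · rw [if_pos hb, hb]; exact hc
    · rw [if_neg hb]
      rcases hpred x b with h0 | h1'
      · exact h0
      · exfalso
        have hpair : p x b + p x c = ∑ b' ∈ ({b, c} : Finset (OutputString S x)), p x b' :=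
          (Finset.sum_pair hb).symm
        have hle : ∑ b' ∈ ({b, c} : Finset (OutputString S x)), p x b'
            ≤ ∑ b' : OutputString S x, p x b' :=
          Finset.sum_le_sum_of_subset_of_nonneg (Finset.subset_univ _)
            (fun b' _ _ => hpos x b')
        rw [hs, ← hpair, h1', hc] at hle
        norm_num at hle
  choose A hAs using hA
  have stab : ∀ (x y : InputString S) (i : S.I), x i = y i → HEq (A x i) (A y i) := by
    intro x y i hxyi
    obtain ⟨c', hc'⟩ : ∃ c' : OutputString S y, HEq (c' i) (A x i) :=
      ⟨pinOut x y i hxyi (A x i), pinOut_heq x y i hxyi (A x i)⟩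
    have h1 : marg S p x {i} (A x) = 1 := by
      rw [marg_indicator p x (A x) (hAs x) {i} (A x)]
      simp
    have h2 : marg S p x {i} (A x) = marg S p y {i} c' := by
      refine ns_marg hns {i} x y ?_ (A x) c' ?_
      · intro j hj
        rw [Set.mem_singleton_iff] at hj
        subst hj; exact hxyi
      · intro j hj
        rw [Set.mem_singleton_iff] at hj
        subst hj; exact hc'.symm
    have h3 : marg S p y {i} c' = if (∀ j ∈ ({i} : Set S.I), A y j = c' j) then 1 else 0 :=
      marg_indicator p y (A y) (hAs y) {i} c'
    rw [h2, h3] at h1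
    have h4 : A y i = c' i := by
      by_contra hne
      rw [if_neg] at h1
      · norm_num at h1
      · intro h; exact hne (h i (Set.mem_singleton i))
    rw [h4]
    exact hc'.symm
  have d : InputString S := fun j => Classical.arbitrary (S.M j)
  refine ⟨fun i m => cast (congrArg (S.O i) (Function.update_self i m d))
    (A (Function.update d i m) i), ?_⟩
  funext x b
  rw [hAs x b, detB_apply]
  have hAx : A x = fun i => cast (congrArg (S.O i) (Function.update_self i (x i) d))
      (A (Function.update d i (x i)) i) := by
    funext i
    refine eq_of_heq (((stab x (Function.update d i (x i)) i
      (Function.update_self i (x i) d).symm)).trans (cast_heq _ _).symm)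
  rw [← hAx]

end AuxLemmas3

section AuxLemmas4

variable {S : Scenario}

lemma ite_zmul' {P Q R : Prop} {iP : Decidable P} {iQ : Decidable Q} {iR : Decidable R}
    (hR : R ↔ P ∧ Q) (u v : ℝ) :
    (@ite _ P iP u 0) * (@ite _ Q iQ v 0) = @ite _ R iR (u * v) 0 := by
  by_cases hP : P
  · by_cases hQ : Q
    · rw [if_pos hP, if_pos hQ, if_pos (hR.mpr ⟨hP, hQ⟩)]
    · rw [if_neg hQ, if_neg (fun hr => hQ (hR.mp hr).2), mul_zero]
  · rw [if_neg hP, if_neg (fun hr => hP (hR.mp hr).1), zero_mul]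

lemma ite_and_left' {P Q R : Prop} {iQ : Decidable Q} {iR : Decidable R}
    (hR : R ↔ P ∧ Q) (hP : P) (u : ℝ) :
    (@ite _ Q iQ u 0) = @ite _ R iR u 0 := by
  by_cases hQ : Q
  · rw [if_pos hQ, if_pos (hR.mpr ⟨hP, hQ⟩)]
  · rw [if_neg hQ, if_neg (fun hr => hQ (hR.mp hr).2)]

lemma ite_and_left {P Q : Prop} [Decidable P] [Decidable Q] [Decidable (P ∧ Q)]
    (hP : P) (u : ℝ) : (if Q then u else 0) = if P ∧ Q then u else 0 := by
  by_cases hQ : Q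
  · rw [if_pos hQ, if_pos ⟨hP, hQ⟩]
  · rw [if_neg hQ, if_neg (fun h => hQ h.2)]

lemma ite_zmul {P Q : Prop} [Decidable P] [Decidable Q] [Decidable (P ∧ Q)]
    (u v : ℝ) : (if P then u else 0) * (if Q then v else 0) = if P ∧ Q then u * v else 0 := by
  by_cases hP : P <;> by_cases hQ : Q <;>
    simp [hP, hQ]

lemma extendInput_fst {M' : ∀ i, Set (S.M i)} {x : InputString S}
    {k : (S.restrict M').I} (h : x k.1 ∈ M' k.1) :
    (extendInput S M' x k).1 = x k.1 := by
  unfold extendInput; exact congrArg Subtype.val (dif_pos h)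

lemma extendOutput_heq {M' : ∀ i, Set (S.M i)} {x : InputString S} {a : OutputString S x}
    {k : (S.restrict M').I} (h : x k.1 ∈ M' k.1) :
    HEq (extendOutput S M' x a k) (a k.1) := by
  rw [extendOutput, dif_pos h]; exact cast_heq _ _

lemma ext_cond {M' : ∀ i, Set (S.M i)} {x : InputString S} {a : OutputString S x}
    {k : (S.restrict M').I} (h : x k.1 ∈ M' k.1)
    (b : OutputString (S.restrict M') (extendInput S M' x)) :
    b k = extendOutput S M' x a k ↔ HEq (b k) (a k.1) :=
  ⟨fun hb => (heq_of_eq hb).trans (extendOutput_heq h),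
   fun hb => eq_of_heq (hb.trans (extendOutput_heq h).symm)⟩

/-- glue outputs over the two halves of the bipartition into an output string of `S` -/
def glueOut (M' : ∀ i, Set (S.M i)) (x : InputString S)
    (b : OutputString (S.restrict M') (extendInput S M' x))
    (c : OutputString (S.restrict fun i => (M' i)ᶜ) (extendInput S (fun i => (M' i)ᶜ) x)) :
    OutputString S x := fun j =>
  if h : x j ∈ M' j then
    cast (congrArg (S.O j) (extendInput_fst (M' := M') (k := ⟨j, ⟨x j, h⟩⟩) h))
      (b ⟨j, ⟨x j, h⟩⟩)
  else
    cast (congrArg (S.O j)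
        (extendInput_fst (M' := fun i => (M' i)ᶜ) (k := ⟨j, ⟨x j, h⟩⟩) h))
      (c ⟨j, ⟨x j, h⟩⟩)

lemma glueOut_heq_pos {M' : ∀ i, Set (S.M i)} {x : InputString S}
    {b : OutputString (S.restrict M') (extendInput S M' x)}
    {c : OutputString (S.restrict fun i => (M' i)ᶜ) (extendInput S (fun i => (M' i)ᶜ) x)}
    {j : S.I} (h : x j ∈ M' j) :
    HEq (glueOut M' x b c j) (b ⟨j, ⟨x j, h⟩⟩) := by
  rw [glueOut, dif_pos h]; exact cast_heq _ _

lemma glueOut_heq_neg {M' : ∀ i, Set (S.M i)} {x : InputString S}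
    {b : OutputString (S.restrict M') (extendInput S M' x)}
    {c : OutputString (S.restrict fun i => (M' i)ᶜ) (extendInput S (fun i => (M' i)ᶜ) x)}
    {j : S.I} (h : ¬ x j ∈ M' j) :
    HEq (glueOut M' x b c j) (c ⟨j, ⟨x j, h⟩⟩) := by
  rw [glueOut, dif_neg h]; exact cast_heq _ _

lemma cond_glue (M' : ∀ i, Set (S.M i)) (x : InputString S)
    (b : OutputString (S.restrict M') (extendInput S M' x))
    (c : OutputString (S.restrict fun i => (M' i)ᶜ) (extendInput S (fun i => (M' i)ᶜ) x))
    (aa : OutputString S x) :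
    ((∀ k ∈ {i : (S.restrict M').I | x i.1 ∈ M' i.1},
        b k = extendOutput S M' x aa k) ∧
     (∀ k ∈ {i : (S.restrict fun i => (M' i)ᶜ).I | x i.1 ∈ (M' i.1)ᶜ},
        c k = extendOutput S (fun i => (M' i)ᶜ) x aa k))
      ↔ aa = glueOut M' x b c := by
  constructor
  · rintro ⟨h1, h2⟩
    funext j
    by_cases h : x j ∈ M' j
    · exact eq_of_heq ((((ext_cond h b).mp (h1 ⟨j, ⟨x j, h⟩⟩ h)).symm).trans
        (glueOut_heq_pos h).symm)
    · exact eq_of_heq ((((ext_cond h c).mp (h2 ⟨j, ⟨x j, h⟩⟩ h)).symm).trans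
        (glueOut_heq_neg h).symm)
  · rintro rfl
    constructor
    · intro k hk
      exact (ext_cond hk b).mpr (glueOut_heq_pos hk).symm
    · intro k hk
      exact (ext_cond hk c).mpr (glueOut_heq_neg hk).symm

/-- the marginals of a behaviour product factorize -/
lemma marg_bprod (M' : ∀ i, Set (S.M i)) (p' : Behaviour (S.restrict M'))
    (p'' : Behaviour (S.restrict fun i => (M' i)ᶜ)) (x : InputString S) (V : Set S.I)
    (a : OutputString S x) :
    marg S (bprod S M' p' p'') x V a
      = marg (S.restrict M') p' (extendInput S M' x)
          {k : (S.restrict M').I | k.1 ∈ V ∧ x k.1 ∈ M' k.1} (extendOutput S M' x a)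
        * marg (S.restrict fun i => (M' i)ᶜ) p'' (extendInput S (fun i => (M' i)ᶜ) x)
          {k : (S.restrict fun i => (M' i)ᶜ).I | k.1 ∈ V ∧ x k.1 ∈ (M' k.1)ᶜ}
          (extendOutput S (fun i => (M' i)ᶜ) x a) := by
  have hterm : ∀ aa : OutputString S x,
      bprod S M' p' p'' x aa
        = ∑ b : OutputString (S.restrict M') (extendInput S M' x),
            ∑ c : OutputString (S.restrict fun i => (M' i)ᶜ)
                (extendInput S (fun i => (M' i)ᶜ) x),
              (if (∀ k ∈ {i : (S.restrict M').I | x i.1 ∈ M' i.1},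
                    b k = extendOutput S M' x aa k) ∧
                  (∀ k ∈ {i : (S.restrict fun i => (M' i)ᶜ).I | x i.1 ∈ (M' i.1)ᶜ},
                    c k = extendOutput S (fun i => (M' i)ᶜ) x aa k)
                then p' (extendInput S M' x) b
                      * p'' (extendInput S (fun i => (M' i)ᶜ) x) c
                else 0) := by
    intro aa
    rw [bprod, marg, marg, Finset.sum_mul_sum]
    exact Finset.sum_congr rfl fun b _ => Finset.sum_congr rfl fun c _ =>
      ite_zmul' Iff.rfl _ _
  rw [marg]
  calc
    ∑ aa : OutputString S x, (if ∀ j ∈ V, aa j = a j then bprod S M' p' p'' x aa else 0)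
      = ∑ aa : OutputString S x,
          ∑ b : OutputString (S.restrict M') (extendInput S M' x),
            ∑ c : OutputString (S.restrict fun i => (M' i)ᶜ)
                (extendInput S (fun i => (M' i)ᶜ) x),
              (if (∀ j ∈ V, aa j = a j) ∧
                  ((∀ k ∈ {i : (S.restrict M').I | x i.1 ∈ M' i.1},
                      b k = extendOutput S M' x aa k) ∧
                   (∀ k ∈ {i : (S.restrict fun i => (M' i)ᶜ).I | x i.1 ∈ (M' i.1)ᶜ},
                      c k = extendOutput S (fun i => (M' i)ᶜ) x aa k))
                then p' (extendInput S M' x) b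
                      * p'' (extendInput S (fun i => (M' i)ᶜ) x) c
                else 0) := by
        refine Finset.sum_congr rfl fun aa _ => ?_
        by_cases h : ∀ j ∈ V, aa j = a j
        · rw [if_pos h, hterm aa]
          exact Finset.sum_congr rfl fun b _ => Finset.sum_congr rfl fun c _ =>
            ite_and_left' Iff.rfl h _
        · rw [if_neg h]
          symm
          rw [Finset.sum_eq_zero]
          intro b _
          rw [Finset.sum_eq_zero]
          intro c _
          rw [if_neg (fun hcon => h hcon.1)]
    _ = ∑ b : OutputString (S.restrict M') (extendInput S M' x),
          ∑ c : OutputString (S.restrict fun i => (M' i)ᶜ)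
              (extendInput S (fun i => (M' i)ᶜ) x),
            (if (∀ k ∈ {k : (S.restrict M').I | k.1 ∈ V ∧ x k.1 ∈ M' k.1},
                  b k = extendOutput S M' x a k) ∧
                (∀ k ∈ {k : (S.restrict fun i => (M' i)ᶜ).I | k.1 ∈ V ∧ x k.1 ∈ (M' k.1)ᶜ},
                  c k = extendOutput S (fun i => (M' i)ᶜ) x a k)
              then p' (extendInput S M' x) b
                    * p'' (extendInput S (fun i => (M' i)ᶜ) x) c
              else 0) := by
        rw [Finset.sum_comm]
        refine Finset.sum_congr rfl fun b _ => ?_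
        rw [Finset.sum_comm]
        refine Finset.sum_congr rfl fun c _ => ?_
        rw [Finset.sum_eq_single (glueOut M' x b c)]
        · refine if_congr ?_ rfl rfl
          constructor
          · rintro ⟨hV, hbc⟩
            constructor
            · intro k hk
              refine (ext_cond hk.2 b).mpr ?_
              have := hV k.1 hk.1
              exact (glueOut_heq_pos hk.2).symm.trans (heq_of_eq this)
            · intro k hk
              have := hV k.1 hk.1
              exact (ext_cond hk.2 c).mpr ((glueOut_heq_neg hk.2).symm.trans (heq_of_eq this))
          · rintro ⟨hb, hc⟩
            refine ⟨?_, (cond_glue M' x b c (glueOut M' x b c)).mpr rfl⟩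
            intro j hj
            by_cases h : x j ∈ M' j
            · exact eq_of_heq ((glueOut_heq_pos h).trans
                ((ext_cond h b).mp (hb ⟨j, ⟨x j, h⟩⟩ ⟨hj, h⟩)))
            · exact eq_of_heq ((glueOut_heq_neg h).trans
                ((ext_cond h c).mp (hc ⟨j, ⟨x j, h⟩⟩ ⟨hj, h⟩)))
        · intro aa _ haa
          rw [if_neg]
          rintro ⟨-, hbc⟩
          exact haa ((cond_glue M' x b c aa).mp hbc)
        · simp
    _ = _ := by
        rw [marg, marg, Finset.sum_mul_sum]
        exact Finset.sum_congr rfl fun b _ => Finset.sum_congr rfl fun c _ =>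
          (ite_zmul' Iff.rfl _ _).symm

end AuxLemmas4

section AuxLemmas5

variable {S : Scenario}

lemma marg_empty' (p : Behaviour S) (x : InputString S) (a : OutputString S x) :
    marg S p x ∅ a = ∑ b : OutputString S x, p x b := by
  rw [marg]
  refine Finset.sum_congr rfl fun b _ => ?_
  rw [if_pos]
  intro j hj
  exact absurd hj (Set.notMem_empty j)

lemma extendInput_congr {M' : ∀ i, Set (S.M i)} {x y : InputString S}
    {k : (S.restrict M').I} (h : x k.1 = y k.1) :
    extendInput S M' x k = extendInput S M' y k := by
  rw [extendInput, extendInput]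
  by_cases hx : x k.1 ∈ M' k.1
  · refine (dif_pos hx).trans (Eq.trans ?_ (dif_pos (show y k.1 ∈ M' k.1 by rwa [h] at hx)).symm)
    exact Subtype.ext h
  · refine (dif_neg hx).trans (Eq.trans ?_ (dif_neg (show y k.1 ∉ M' k.1 by rwa [h] at hx)).symm)
    rfl

lemma bprod_mem_NSset {M' : ∀ i, Set (S.M i)} {p' : Behaviour (S.restrict M')}
    {p'' : Behaviour (S.restrict fun i => (M' i)ᶜ)}
    (h' : p' ∈ NSset (S.restrict M')) (h'' : p'' ∈ NSset (S.restrict fun i => (M' i)ᶜ)) :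
    bprod S M' p' p'' ∈ NSset S := by
  obtain ⟨⟨h'pos, h'sum⟩, h'ns⟩ := h'
  obtain ⟨⟨h''pos, h''sum⟩, h''ns⟩ := h''
  refine ⟨⟨?_, ?_⟩, ?_⟩
  · intro x a
    rw [bprod]
    exact mul_nonneg (marg_nonneg h'pos _ _ _) (marg_nonneg h''pos _ _ _)
  · intro x
    have a0 : OutputString S x := fun j => Classical.arbitrary _
    rw [← marg_empty' (bprod S M' p' p'') x a0, marg_bprod]
    rw [marg_congr_set _ _ (show {k : (S.restrict M').I | k.1 ∈ (∅ : Set S.I) ∧ x k.1 ∈ M' k.1}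
        = ∅ by ext k; simp) _]
    rw [marg_congr_set _ _
      (show {k : (S.restrict fun i => (M' i)ᶜ).I | k.1 ∈ (∅ : Set S.I) ∧ x k.1 ∈ (M' k.1)ᶜ}
        = ∅ by ext k; simp) _]
    rw [marg_empty ⟨h'pos, h'sum⟩, marg_empty ⟨h''pos, h''sum⟩, one_mul]
  · intro i x m a a' hh
    rw [marg_bprod, marg_bprod]
    have hset1 : {k : (S.restrict M').I | k.1 ∈ ({i}ᶜ : Set S.I)
          ∧ Function.update x i m k.1 ∈ M' k.1}
        = {k : (S.restrict M').I | k.1 ∈ ({i}ᶜ : Set S.I) ∧ x k.1 ∈ M' k.1} := by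
      ext k
      simp only [Set.mem_setOf_eq, Set.mem_compl_iff, Set.mem_singleton_iff]
      refine and_congr_right fun hk => ?_
      rw [Function.update_of_ne hk]
    have hset2 : {k : (S.restrict fun i => (M' i)ᶜ).I | k.1 ∈ ({i}ᶜ : Set S.I)
          ∧ Function.update x i m k.1 ∈ (M' k.1)ᶜ}
        = {k : (S.restrict fun i => (M' i)ᶜ).I | k.1 ∈ ({i}ᶜ : Set S.I) ∧ x k.1 ∈ (M' k.1)ᶜ} := by
      ext k
      simp only [Set.mem_setOf_eq, Set.mem_compl_iff, Set.mem_singleton_iff]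
      refine and_congr_right fun hk => ?_
      rw [Function.update_of_ne hk]
    rw [marg_congr_set _ _ hset1, marg_congr_set _ _ hset2]
    have fact1 : marg (S.restrict M') p' (extendInput S M' x)
          {k : (S.restrict M').I | k.1 ∈ ({i}ᶜ : Set S.I) ∧ x k.1 ∈ M' k.1}
          (extendOutput S M' x a)
        = marg (S.restrict M') p' (extendInput S M' (Function.update x i m))
          {k : (S.restrict M').I | k.1 ∈ ({i}ᶜ : Set S.I) ∧ x k.1 ∈ M' k.1}
          (extendOutput S M' (Function.update x i m) a') := by
      refine ns_marg h'ns _ _ _ ?_ _ _ ?_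
      · intro k hk
        have hk' : k.1 ≠ i ∧ x k.1 ∈ M' k.1 := hk
        exact extendInput_congr (Function.update_of_ne hk'.1 m x).symm
      · intro k hk
        have hk' : k.1 ≠ i ∧ x k.1 ∈ M' k.1 := hk
        have h1 := extendOutput_heq (M' := M') (x := x) (a := a) hk'.2
        have h2 : Function.update x i m k.1 ∈ M' k.1 := by
          rw [Function.update_of_ne hk'.1]; exact hk'.2
        have h3 := extendOutput_heq (M' := M') (x := Function.update x i m) (a := a') h2
        exact (h1.trans (hh k.1 hk'.1)).trans h3.symm
    have fact2 : marg (S.restrict fun i => (M' i)ᶜ) p'' (extendInput S (fun i => (M' i)ᶜ) x)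
          {k : (S.restrict fun i => (M' i)ᶜ).I | k.1 ∈ ({i}ᶜ : Set S.I) ∧ x k.1 ∈ (M' k.1)ᶜ}
          (extendOutput S (fun i => (M' i)ᶜ) x a)
        = marg (S.restrict fun i => (M' i)ᶜ) p''
          (extendInput S (fun i => (M' i)ᶜ) (Function.update x i m))
          {k : (S.restrict fun i => (M' i)ᶜ).I | k.1 ∈ ({i}ᶜ : Set S.I) ∧ x k.1 ∈ (M' k.1)ᶜ}
          (extendOutput S (fun i => (M' i)ᶜ) (Function.update x i m) a') := by
      refine ns_marg h''ns _ _ _ ?_ _ _ ?_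
      · intro k hk
        have hk' : k.1 ≠ i ∧ x k.1 ∈ (M' k.1)ᶜ := hk
        exact extendInput_congr (Function.update_of_ne hk'.1 m x).symm
      · intro k hk
        have hk' : k.1 ≠ i ∧ x k.1 ∈ (M' k.1)ᶜ := hk
        have h1 := extendOutput_heq (M' := fun i => (M' i)ᶜ) (x := x) (a := a) hk'.2
        have h2 : Function.update x i m k.1 ∈ (M' k.1)ᶜ := by
          rw [Function.update_of_ne hk'.1]; exact hk'.2
        have h3 := extendOutput_heq (M' := fun i => (M' i)ᶜ)
          (x := Function.update x i m) (a := a') h2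
        exact (h1.trans (hh k.1 hk'.1)).trans h3.symm
    rw [fact1, fact2]

lemma bprod_det {M' : ∀ i, Set (S.M i)} (F : ∀ i (m : S.M i), S.O i m) :
    bprod S M' (detB (S.restrict M') fun k m => F k.1 m.1)
        (detB (S.restrict fun i => (M' i)ᶜ) fun k m => F k.1 m.1)
      = detB S F := by
  funext x a
  rw [bprod, marg_detB (fun (k : (S.restrict M').I) (m : (S.restrict M').M k) => F k.1 m.1),
    marg_detB (fun (k : (S.restrict fun i => (M' i)ᶜ).I) (m : (S.restrict fun i => (M' i)ᶜ).M k) => F k.1 m.1), detB_apply]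
  have hiff : (a = fun i => F i (x i)) ↔
      ((∀ k ∈ {i : (S.restrict M').I | x i.1 ∈ M' i.1},
          extendOutput S M' x a k = F k.1 (extendInput S M' x k).1) ∧
       (∀ k ∈ {i : (S.restrict fun i => (M' i)ᶜ).I | x i.1 ∈ (M' i.1)ᶜ},
          extendOutput S (fun i => (M' i)ᶜ) x a k
            = F k.1 (extendInput S (fun i => (M' i)ᶜ) x k).1)) := by
    constructor
    · intro ha
      constructor
      · intro k hk
        exact (eq_app_congr (F k.1) (extendInput_fst hk).symm
          ((extendOutput_heq hk).symm : HEq (a k.1) (extendOutput S M' x a k))).mp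
          (congrFun ha k.1)
      · intro k hk
        exact (eq_app_congr (F k.1) (extendInput_fst (M' := fun i => (M' i)ᶜ) hk).symm
          ((extendOutput_heq (M' := fun i => (M' i)ᶜ) hk).symm :
            HEq (a k.1) (extendOutput S (fun i => (M' i)ᶜ) x a k))).mp
          (congrFun ha k.1)
    · rintro ⟨h1, h2⟩
      funext j
      by_cases h : x j ∈ M' j
      · exact (eq_app_congr (F j) (extendInput_fst (k := ⟨j, ⟨x j, h⟩⟩) h).symm
          ((extendOutput_heq (k := ⟨j, ⟨x j, h⟩⟩) h).symm :
            HEq (a j) (extendOutput S M' x a ⟨j, ⟨x j, h⟩⟩))).mpr (h1 ⟨j, ⟨x j, h⟩⟩ h)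
      · exact (eq_app_congr (F j)
          (extendInput_fst (M' := fun i => (M' i)ᶜ) (k := ⟨j, ⟨x j, h⟩⟩) h).symm
          ((extendOutput_heq (M' := fun i => (M' i)ᶜ) (k := ⟨j, ⟨x j, h⟩⟩) h).symm :
            HEq (a j) (extendOutput S (fun i => (M' i)ᶜ) x a ⟨j, ⟨x j, h⟩⟩))).mpr
          (h2 ⟨j, ⟨x j, h⟩⟩ h)
  rw [ite_zmul' hiff 1 1, one_mul]

/-- part (i): `P_NS(S') ⊙ P_NS(S'^⊥) = P_NS(S)` -/
lemma pns_prod_eq (M' : ∀ i, Set (S.M i)) :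
    bprodSet S M' (PNS (S.restrict M')) (PNS (S.restrict fun i => (M' i)ᶜ)) = PNS S := by
  apply Set.Subset.antisymm
  · rintro q ⟨p', hp', p'', hp'', rfl⟩
    obtain ⟨f', hf'⟩ := pns_exists_det hp'
    obtain ⟨f'', hf''⟩ := pns_exists_det hp''
    have e1 : f' = fun (k : (S.restrict M').I) (m : (S.restrict M').M k) =>
        (fun i (m : S.M i) => if h : m ∈ M' i then f' ⟨i, ⟨m, h⟩⟩ ⟨m, h⟩
          else f'' ⟨i, ⟨m, h⟩⟩ ⟨m, h⟩) k.1 m.1 := by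
      funext k m
      show f' k m = if h : m.1 ∈ M' k.1 then f' ⟨k.1, ⟨m.1, h⟩⟩ ⟨m.1, h⟩
        else f'' ⟨k.1, ⟨m.1, h⟩⟩ ⟨m.1, h⟩
      refine Eq.trans ?_ (dif_pos m.2).symm
      rfl
    have e2 : f'' = fun (k : (S.restrict fun i => (M' i)ᶜ).I) (m : (S.restrict fun i => (M' i)ᶜ).M k) =>
        (fun i (m : S.M i) => if h : m ∈ M' i then f' ⟨i, ⟨m, h⟩⟩ ⟨m, h⟩
          else f'' ⟨i, ⟨m, h⟩⟩ ⟨m, h⟩) k.1 m.1 := by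
      funext k m
      show f'' k m = if h : m.1 ∈ M' k.1 then f' ⟨k.1, ⟨m.1, h⟩⟩ ⟨m.1, h⟩
        else f'' ⟨k.1, ⟨m.1, h⟩⟩ ⟨m.1, h⟩
      refine Eq.trans ?_ (dif_neg m.2).symm
      rfl
    rw [hf', hf'', congrArg (detB (S.restrict M')) e1,
      congrArg (detB (S.restrict fun i => (M' i)ᶜ)) e2,
      bprod_det (M' := M') (fun i (m : S.M i) =>
        if h : m ∈ M' i then f' ⟨i, ⟨m, h⟩⟩ ⟨m, h⟩ else f'' ⟨i, ⟨m, h⟩⟩ ⟨m, h⟩)]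
    exact detB_mem_PNS _
  · intro q hq
    obtain ⟨F, rfl⟩ := pns_exists_det hq
    exact ⟨detB (S.restrict M') fun k m => F k.1 m.1, detB_mem_PNS _,
      detB (S.restrict fun i => (M' i)ᶜ) fun k m => F k.1 m.1, detB_mem_PNS _, bprod_det F⟩

lemma NSset_convex : Convex ℝ (NSset S) := by
  intro p hp q hq α β hα hβ hαβ
  refine ⟨⟨?_, ?_⟩, ?_⟩
  · intro x a
    have : (α • p + β • q) x a = α * p x a + β * q x a := rfl
    rw [this]
    exact add_nonneg (mul_nonneg hα (hp.1.1 x a)) (mul_nonneg hβ (hq.1.1 x a))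
  · intro x
    have : ∀ a, (α • p + β • q) x a = α * p x a + β * q x a := fun a => rfl
    rw [Finset.sum_congr rfl fun a _ => this a, Finset.sum_add_distrib,
      ← Finset.mul_sum, ← Finset.mul_sum, hp.1.2 x, hq.1.2 x, mul_one, mul_one, hαβ]
  · intro i x m a a' hh
    rw [marg_combo, marg_combo, hp.2 i x m a a' hh, hq.2 i x m a a' hh]

lemma Bell_subset_NS : BellSet S ⊆ NSset S :=
  convexHull_min (fun p hp => ⟨hp.1, hp.2.1⟩) NSset_convex

lemma bprod_combo_right (M' : ∀ i, Set (S.M i)) (p' : Behaviour (S.restrict M'))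
    (q1 q2 : Behaviour (S.restrict fun i => (M' i)ᶜ)) (α β : ℝ) :
    bprod S M' p' (α • q1 + β • q2) = α • bprod S M' p' q1 + β • bprod S M' p' q2 := by
  funext x a
  show bprod S M' p' (α • q1 + β • q2) x a
    = α * bprod S M' p' q1 x a + β * bprod S M' p' q2 x a
  rw [bprod, bprod, bprod, marg_combo]
  ring

lemma bprod_combo_left (M' : ∀ i, Set (S.M i)) (q1 q2 : Behaviour (S.restrict M'))
    (p'' : Behaviour (S.restrict fun i => (M' i)ᶜ)) (α β : ℝ) :
    bprod S M' (α • q1 + β • q2) p'' = α • bprod S M' q1 p'' + β • bprod S M' q2 p'' := by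
  funext x a
  show bprod S M' (α • q1 + β • q2) p'' x a
    = α * bprod S M' q1 p'' x a + β * bprod S M' q2 p'' x a
  rw [bprod, bprod, bprod, marg_combo]
  ring

lemma bprod_mem_Bell {M' : ∀ i, Set (S.M i)} {p' : Behaviour (S.restrict M')}
    {p'' : Behaviour (S.restrict fun i => (M' i)ᶜ)}
    (h' : p' ∈ BellSet (S.restrict M')) (h'' : p'' ∈ BellSet (S.restrict fun i => (M' i)ᶜ)) :
    bprod S M' p' p'' ∈ BellSet S := by
  have step1 : ∀ p'0 ∈ PNS (S.restrict M'), ∀ q ∈ BellSet (S.restrict fun i => (M' i)ᶜ),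
      bprod S M' p'0 q ∈ BellSet S := by
    intro p'0 hp'0 q hq
    have hconv : Convex ℝ {q0 : Behaviour (S.restrict fun i => (M' i)ᶜ) |
        bprod S M' p'0 q0 ∈ BellSet S} := by
      intro q1 h1 q2 h2 α β hα hβ hαβ
      show bprod S M' p'0 (α • q1 + β • q2) ∈ BellSet S
      rw [bprod_combo_right]
      exact (convex_convexHull ℝ (PNS S)) h1 h2 hα hβ hαβ
    refine convexHull_min ?_ hconv hq
    intro q0 hq0
    show bprod S M' p'0 q0 ∈ BellSet S
    refine subset_convexHull ℝ (PNS S) ?_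
    rw [← pns_prod_eq M']
    exact ⟨p'0, hp'0, q0, hq0, rfl⟩
  have hconv : Convex ℝ {q0 : Behaviour (S.restrict M') | bprod S M' q0 p'' ∈ BellSet S} := by
    intro q1 h1 q2 h2 α β hα hβ hαβ
    show bprod S M' (α • q1 + β • q2) p'' ∈ BellSet S
    rw [bprod_combo_left]
    exact (convex_convexHull ℝ (PNS S)) h1 h2 hα hβ hαβ
  refine convexHull_min ?_ hconv h'
  intro p'0 hp'0
  exact step1 p'0 hp'0 p'' h''

end AuxLemmas5

section Witness

variable {S : Scenario}

/-- a deterministic family overridden at two input slots -/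
def fam (F0 : ∀ i (m : S.M i), S.O i m) {i1 i0 : S.I} (m1 : S.M i1) (m0 : S.M i0)
    (t : S.O i1 m1) (s : S.O i0 m0) : ∀ i (m : S.M i), S.O i m :=
  Function.update (Function.update F0 i1 (Function.update (F0 i1) m1 t)) i0
    (Function.update (F0 i0) m0 s)

lemma fam_eval1 (F0 : ∀ i (m : S.M i), S.O i m) {i1 i0 : S.I} (h10 : i1 ≠ i0)
    {m1 : S.M i1} {m0 : S.M i0} (t : S.O i1 m1) (s : S.O i0 m0) :
    fam F0 m1 m0 t s i1 m1 = t := by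
  rw [fam, Function.update_of_ne h10, Function.update_self, Function.update_self]

lemma fam_eval0 (F0 : ∀ i (m : S.M i), S.O i m) {i1 i0 : S.I}
    {m1 : S.M i1} {m0 : S.M i0} (t : S.O i1 m1) (s : S.O i0 m0) :
    fam F0 m1 m0 t s i0 m0 = s := by
  rw [fam, Function.update_self, Function.update_self]

/-- output string pinning two coordinates -/
def pin2 {x : InputString S} {i1 i0 : S.I} {m1 : S.M i1} {m0 : S.M i0}
    (hx1 : x i1 = m1) (hx0 : x i0 = m0) (t : S.O i1 m1) (s : S.O i0 m0) :
    OutputString S x := fun j =>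
  if h : j = i1 then cast (by subst h; exact congrArg (S.O j) hx1.symm) t
  else if h0 : j = i0 then cast (by subst h0; exact congrArg (S.O j) hx0.symm) s
  else Classical.arbitrary _

lemma pin2_heq1 {x : InputString S} {i1 i0 : S.I} {m1 : S.M i1} {m0 : S.M i0}
    (hx1 : x i1 = m1) (hx0 : x i0 = m0) (t : S.O i1 m1) (s : S.O i0 m0) :
    HEq (pin2 hx1 hx0 t s i1) t := by
  rw [pin2, dif_pos rfl]; exact cast_heq _ _

lemma pin2_heq0 {x : InputString S} {i1 i0 : S.I} (h10 : i1 ≠ i0) {m1 : S.M i1}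
    {m0 : S.M i0} (hx1 : x i1 = m1) (hx0 : x i0 = m0) (t : S.O i1 m1) (s : S.O i0 m0) :
    HEq (pin2 hx1 hx0 t s i0) s := by
  rw [pin2, dif_neg (fun h => h10 h.symm), dif_pos rfl]; exact cast_heq _ _

lemma ite_prop_congr {P Q : Prop} {iP : Decidable P} {iQ : Decidable Q}
    (h : P ↔ Q) (u v : ℝ) : @ite _ P iP u v = @ite _ Q iQ u v := by
  by_cases hP : P
  · rw [if_pos hP, if_pos (h.mp hP)]
  · rw [if_neg hP, if_neg (fun q => hP (h.mpr q))]

lemma witness_lemma (M' : ∀ i, Set (S.M i)) {i1 i0 : S.I} (h10 : i1 ≠ i0)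
    {m1 : S.M i1} (hm1 : m1 ∈ M' i1) {m0 : S.M i0} (hm0 : m0 ∉ M' i0) :
    ∃ p : Behaviour S, p ∈ BellSet S ∧
      p ∉ bprodSet S M' (NSset (S.restrict M')) (NSset (S.restrict fun i => (M' i)ᶜ)) := by
  obtain ⟨o, o', ho⟩ := (Fintype.one_lt_card_iff (α := S.O i1 m1)).mp (by have := S.hO i1 m1; omega)
  obtain ⟨u, u', hu⟩ := (Fintype.one_lt_card_iff (α := S.O i0 m0)).mp (by have := S.hO i0 m0; omega)
  set F0 : ∀ i (m : S.M i), S.O i m := fun i m => Classical.arbitrary _ with hF0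
  set xh : InputString S :=
    Function.update (Function.update (fun j => Classical.arbitrary (S.M j)) i1 m1) i0 m0
    with hxh
  have hx1 : xh i1 = m1 := by
    rw [hxh, Function.update_of_ne h10, Function.update_self]
  have hx0 : xh i0 = m0 := by
    rw [hxh, Function.update_self]
  set p : Behaviour S := (1/2 : ℝ) • detB S (fam F0 m1 m0 o u)
    + (1/2 : ℝ) • detB S (fam F0 m1 m0 o' u') with hpdef
  have hP : ∀ (t : S.O i1 m1) (s : S.O i0 m0) (t' : S.O i1 m1) (s' : S.O i0 m0),
      marg S (detB S (fam F0 m1 m0 t' s')) xh {i1, i0} (pin2 hx1 hx0 t s)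
        = if t = t' ∧ s = s' then 1 else 0 := by
    intro t s t' s'
    rw [marg_detB]
    refine ite_prop_congr ?_ 1 0
    have iff1 : ∀ (t' : S.O i1 m1) (s' : S.O i0 m0),
        (t = fam F0 m1 m0 t' s' i1 m1)
          ↔ (pin2 hx1 hx0 t s i1 = fam F0 m1 m0 t' s' i1 (xh i1)) := fun t' s' =>
      eq_app_congr (fam F0 m1 m0 t' s' i1) hx1.symm (pin2_heq1 hx1 hx0 t s).symm
    have iff0 : ∀ (t' : S.O i1 m1) (s' : S.O i0 m0),
        (s = fam F0 m1 m0 t' s' i0 m0)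
          ↔ (pin2 hx1 hx0 t s i0 = fam F0 m1 m0 t' s' i0 (xh i0)) := fun t' s' =>
      eq_app_congr (fam F0 m1 m0 t' s' i0) hx0.symm (pin2_heq0 h10 hx1 hx0 t s).symm
    constructor
    · intro h
      have e1 := h i1 (Set.mem_insert _ _)
      have e0 := h i0 (Set.mem_insert_of_mem _ rfl)
      have ht := (iff1 t' s').mpr e1
      have hs := (iff0 t' s').mpr e0
      rw [fam_eval1 F0 h10] at ht
      rw [fam_eval0 F0] at hs
      exact ⟨ht, hs⟩
    · rintro ⟨rfl, rfl⟩
      intro j hj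
      simp only [Set.mem_insert_iff, Set.mem_singleton_iff] at hj
      rcases hj with rfl | rfl
      · exact (iff1 t s).mp (fam_eval1 F0 h10 t s).symm
      · exact (iff0 t s).mp (fam_eval0 F0 t s).symm
  have hPp : ∀ (t : S.O i1 m1) (s : S.O i0 m0),
      marg S p xh {i1, i0} (pin2 hx1 hx0 t s)
        = (1/2) * (if t = o ∧ s = u then 1 else 0)
          + (1/2) * (if t = o' ∧ s = u' then 1 else 0) := by
    intro t s
    rw [hpdef, marg_combo, hP t s o u, hP t s o' u']
  refine ⟨p, ?_, ?_⟩
  · exact (convex_convexHull ℝ (PNS S)) (subset_convexHull ℝ _ (detB_mem_PNS _))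
      (subset_convexHull ℝ _ (detB_mem_PNS _)) (by norm_num) (by norm_num) (by norm_num)
  · rintro ⟨p', hp', p'', hp'', hbp⟩
    obtain ⟨A, hAdef⟩ : ∃ A : S.O i1 m1 → S.O i0 m0 → ℝ, ∀ t s,
        A t s = marg (S.restrict M') p' (extendInput S M' xh)
          {k : (S.restrict M').I | k.1 ∈ ({i1, i0} : Set S.I) ∧ xh k.1 ∈ M' k.1}
          (extendOutput S M' xh (pin2 hx1 hx0 t s)) := ⟨_, fun _ _ => rfl⟩
    obtain ⟨B, hBdef⟩ : ∃ B : S.O i1 m1 → S.O i0 m0 → ℝ, ∀ t s,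
        B t s = marg (S.restrict fun i => (M' i)ᶜ) p'' (extendInput S (fun i => (M' i)ᶜ) xh)
          {k : (S.restrict fun i => (M' i)ᶜ).I |
            k.1 ∈ ({i1, i0} : Set S.I) ∧ xh k.1 ∈ (M' k.1)ᶜ}
          (extendOutput S (fun i => (M' i)ᶜ) xh (pin2 hx1 hx0 t s)) := ⟨_, fun _ _ => rfl⟩
    have hQ : ∀ (t : S.O i1 m1) (s : S.O i0 m0),
        A t s * B t s = (1/2) * (if t = o ∧ s = u then 1 else 0)
          + (1/2) * (if t = o' ∧ s = u' then 1 else 0) := by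
      intro t s
      rw [hAdef, hBdef, ← marg_bprod, hbp, hPp]
    have hA : ∀ t s s₂, A t s = A t s₂ := by
      intro t s s₂
      rw [hAdef, hAdef]
      refine marg_congr _ _ _ ?_
      rintro ⟨kv, hkn⟩ hk
      have hk' : kv ∈ ({i1, i0} : Set S.I) ∧ xh kv ∈ M' kv := hk
      have hkv : kv = i1 := by
        rcases hk'.1 with h | h
        · exact h
        · exfalso
          rw [Set.mem_singleton_iff] at h
          subst h
          rw [hx0] at hk'
          exact hm0 hk'.2
      replace hkv := hkv.symm
      subst hkv
      exact eq_of_heq (((extendOutput_heq (M' := M') (x := xh) (a := pin2 hx1 hx0 t s)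
          (k := ⟨i1, hkn⟩) hk'.2).trans (pin2_heq1 hx1 hx0 t s)).trans
        ((pin2_heq1 hx1 hx0 t s₂).symm.trans
          (extendOutput_heq (M' := M') (x := xh) (a := pin2 hx1 hx0 t s₂)
            (k := ⟨i1, hkn⟩) hk'.2).symm))
    have hB : ∀ t s t₂, B t s = B t₂ s := by
      intro t s t₂
      rw [hBdef, hBdef]
      refine marg_congr _ _ _ ?_
      rintro ⟨kv, hkn⟩ hk
      have hk' : kv ∈ ({i1, i0} : Set S.I) ∧ xh kv ∈ (M' kv)ᶜ := hk
      have hkv : kv = i0 := by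
        rcases hk'.1 with h | h
        · exfalso
          subst h
          rw [hx1] at hk'
          exact hk'.2 hm1
        · rwa [Set.mem_singleton_iff] at h
      replace hkv := hkv.symm
      subst hkv
      exact eq_of_heq (((extendOutput_heq (M' := fun i => (M' i)ᶜ) (x := xh)
          (a := pin2 hx1 hx0 t s) (k := ⟨i0, hkn⟩) hk'.2).trans
          (pin2_heq0 h10 hx1 hx0 t s)).trans
        ((pin2_heq0 h10 hx1 hx0 t₂ s).symm.trans
          (extendOutput_heq (M' := fun i => (M' i)ᶜ) (x := xh)
            (a := pin2 hx1 hx0 t₂ s) (k := ⟨i0, hkn⟩) hk'.2).symm))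
    have e1 : A o u * B o u = 1/2 := by
      rw [hQ, if_pos ⟨rfl, rfl⟩, if_neg (fun h => ho h.1)]
      norm_num
    have e2 : A o u * B o' u' = 0 := by
      rw [hA o u u', hB o' u' o, hQ, if_neg (fun h => hu h.2.symm),
        if_neg (fun h => ho h.1)]
      norm_num
    have e3 : A o' u' * B o' u' = 1/2 := by
      rw [hQ, if_neg (fun h => ho h.1.symm), if_pos ⟨rfl, rfl⟩]
      norm_num
    have e4 : A o' u' * B o u = 0 := by
      rw [hA o' u' u, hB o u o', hQ, if_neg (fun h => ho h.1.symm),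
        if_neg (fun h => hu h.2)]
      norm_num
    have h14 : A o u * B o u * (A o' u' * B o' u') = 0 := by
      calc A o u * B o u * (A o' u' * B o' u')
          = (A o u * B o' u') * (A o' u' * B o u) := by ring
        _ = 0 := by rw [e2, zero_mul]
    rw [e1, e3] at h14
    norm_num at h14

lemma pick_parties (hI : 2 ≤ Fintype.card S.I) (M' : ∀ i, Set (S.M i))
    (h : Nonredundant S M') :
    ∃ i1 i0, i1 ≠ i0 ∧ ∃ m1, m1 ∈ M' i1 ∧ ∃ m0, m0 ∉ M' i0 := by
  obtain ⟨ia, hia⟩ := not_forall.mp h.2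
  obtain ⟨ib, hib⟩ := not_forall.mp h.1
  obtain ⟨ma, hma⟩ := Set.nonempty_iff_ne_empty.mpr hia
  obtain ⟨mb, hmb⟩ := (Set.ne_univ_iff_exists_notMem _).mp hib
  by_cases hab : ia = ib
  · subst hab
    obtain ⟨j, hj⟩ := Fintype.exists_ne_of_one_lt_card (by omega) ia
    obtain ⟨m⟩ := S.hM j
    by_cases hm : m ∈ M' j
    · exact ⟨j, ia, hj, m, hm, mb, hmb⟩
    · exact ⟨ia, j, Ne.symm hj, ma, hma, m, hm⟩
  · exact ⟨ia, ib, hab, ma, hma, mb, hmb⟩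

end Witness


/-- For a nontrivial scenario with at least two parties and any disjoint bipartition
`(S', S'^⊥)` determined by `M'`:
(i) `P_NS(S') ⊙ P_NS(S'^⊥) = P_NS(S)`; and (ii) if the bipartition is nonredundant then
`B(S') ⊙ B(S'^⊥) ⊊ B(S)` and `NS(S') ⊙ NS(S'^⊥) ⊊ NS(S)`. -/
theorem bprod_pns_and_strict (S : Scenario)
    (hI : 2 ≤ Fintype.card S.I) (hM2 : ∀ i, 2 ≤ Fintype.card (S.M i))
    (M' : ∀ i, Set (S.M i)) :
    (bprodSet S M' (PNS (S.restrict M')) (PNS (S.restrict fun i => (M' i)ᶜ)) = PNS S) ∧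
    (Nonredundant S M' →
      bprodSet S M' (BellSet (S.restrict M')) (BellSet (S.restrict fun i => (M' i)ᶜ))
          ⊂ BellSet S ∧
      bprodSet S M' (NSset (S.restrict M')) (NSset (S.restrict fun i => (M' i)ᶜ))
          ⊂ NSset S) := by
  constructor
  · exact pns_prod_eq M'
  · intro hnr
    obtain ⟨i1, i0, h10, m1, hm1, m0, hm0⟩ := pick_parties hI M' hnr
    obtain ⟨p, hpB, hpN⟩ := witness_lemma M' h10 hm1 hm0
    have hBsub : bprodSet S M' (BellSet (S.restrict M'))
        (BellSet (S.restrict fun i => (M' i)ᶜ)) ⊆ BellSet S := by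
      rintro q ⟨p', hp', p'', hp'', rfl⟩
      exact bprod_mem_Bell hp' hp''
    have hNsub : bprodSet S M' (NSset (S.restrict M'))
        (NSset (S.restrict fun i => (M' i)ᶜ)) ⊆ NSset S := by
      rintro q ⟨p', hp', p'', hp'', rfl⟩
      exact bprod_mem_NSset hp' hp''
    have hmono : bprodSet S M' (BellSet (S.restrict M'))
        (BellSet (S.restrict fun i => (M' i)ᶜ))
        ⊆ bprodSet S M' (NSset (S.restrict M')) (NSset (S.restrict fun i => (M' i)ᶜ)) :=
      Set.image2_subset Bell_subset_NS Bell_subset_NS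
    constructor
    · rw [Set.ssubset_def]
      exact ⟨hBsub, fun hcon => hpN (hmono (hcon hpB))⟩
    · rw [Set.ssubset_def]
      exact ⟨hNsub, fun hcon => hpN (hcon (Bell_subset_NS hpB))⟩


end
end
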